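/- arXiv:0911.4250 — 8 statements merged into one kernel-verified Lean document; each statement's English description precedes it below -/
import Mathlib

section
/- If γ is an automorphism of G with γ(N) = N, restricting to θ on N and inducing φ on H, then the map χ : H → N defined by γ(t(x)) = t(φ(x))·χ(x) satisfies χ(1) = 1 and the twisted coboundary identity μ(φ(x),φ(y))·θ(μ(x,y))⁻¹ = (χ(x)⁻¹)^{t(φ(y))}·χ(y)⁻¹·χ(xy) for all x, y ∈ H. -/
/-- For γ ∈ Aut(G) normalizing N, restricting to θ on N and inducing
φ on H = G/N, the map χ(x) = t(φ x)⁻¹·γ(t x) satisfies χ(1) = 1, takes values in N,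
and the twisted coboundary identity
μ(φx,φy)·θ(μ(x,y))⁻¹ = (χ(x)⁻¹)^{t(φy)}·χ(y)⁻¹·χ(xy). -/
theorem stmt_1 {G : Type*} [Group G] (N : Subgroup G) [N.Normal]
    (hcomm : ∀ a b : N, a * b = b * a)
    (t : G ⧸ N → G) (ht : ∀ x : G ⧸ N, (QuotientGroup.mk (t x) : G ⧸ N) = x)
    (ht1 : t 1 = 1)
    (μ : G ⧸ N → G ⧸ N → N)
    (hμ : ∀ x y : G ⧸ N, t (x * y) * (μ x y : G) = t x * t y)
    (γ : G ≃* G) (hγ : ∀ n ∈ N, γ n ∈ N) (hγ' : ∀ n ∈ N, γ.symm n ∈ N)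
    (φ : G ⧸ N ≃* G ⧸ N)
    (hφ : ∀ g : G, (QuotientGroup.mk (γ g) : G ⧸ N) = φ (QuotientGroup.mk g)) :
    ∃ χ : G ⧸ N → G,
      (∀ x : G ⧸ N, χ x = (t (φ x))⁻¹ * γ (t x)) ∧
      χ 1 = 1 ∧ (∀ x : G ⧸ N, χ x ∈ N) ∧
      ∀ x y : G ⧸ N,
        (μ (φ x) (φ y) : G) * (γ (μ x y : G))⁻¹ =
          ((t (φ y))⁻¹ * (χ x)⁻¹ * t (φ y)) * (χ y)⁻¹ * χ (x * y) := by
  refine ⟨fun x => (t (φ x))⁻¹ * γ (t x), fun x => rfl, ?_, ?_, ?_⟩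
  · simp [ht1, map_one]
  · intro x
    rw [← QuotientGroup.eq_one_iff]
    simp [QuotientGroup.mk_mul, hφ, ht]
  · intro x y
    have comm : ∀ a b : G, a ∈ N → b ∈ N → a * b = b * a := fun a b ha hb =>
      congrArg Subtype.val (hcomm ⟨a, ha⟩ ⟨b, hb⟩)
    have hχN : ∀ z : G ⧸ N, (t (φ z))⁻¹ * γ (t z) ∈ N := by
      intro z
      rw [← QuotientGroup.eq_one_iff]
      simp [QuotientGroup.mk_mul, hφ, ht]
    set χ : G ⧸ N → G := fun z => (t (φ z))⁻¹ * γ (t z) with hχ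
    have hγt : ∀ z, γ (t z) = t (φ z) * χ z := fun z => by
      simp [hχ, mul_inv_cancel_left]
    have h1 := congrArg γ (hμ x y)
    rw [map_mul, map_mul, hγt, hγt, hγt] at h1
    have h2 : t (φ (x * y)) = t (φ x) * t (φ y) * ((μ (φ x) (φ y) : G))⁻¹ := by
      rw [map_mul φ, ← hμ (φ x) (φ y)]; group
    rw [h2] at h1
    -- h1 : t(φx) * t(φy) * μ'⁻¹ * χ(xy) * γμ = t(φx)*χx * (t(φy)*χy)
    set A := t (φ x); set B := t (φ y)
    set m' : G := (μ (φ x) (φ y) : G)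
    set gm : G := γ (μ x y : G)
    have eq1 : m'⁻¹ * χ (x * y) * gm = (B⁻¹ * χ x * B) * χ y := by
      have h3 : A * (B * (m'⁻¹ * χ (x * y) * gm)) = A * (B * ((B⁻¹ * χ x * B) * χ y)) := by
        calc A * (B * (m'⁻¹ * χ (x * y) * gm)) = A * B * m'⁻¹ * χ (x * y) * gm := by group
          _ = A * χ x * (B * χ y) := h1
          _ = A * (B * ((B⁻¹ * χ x * B) * χ y)) := by group
      exact mul_left_cancel (mul_left_cancel h3)
    set c : G := B⁻¹ * χ x * B with hc
    have hcN : c ∈ N := by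
      have := (inferInstance : N.Normal).conj_mem (χ x) (hχN x) B⁻¹
      simpa [hc] using this
    have hgmN : gm ∈ N := hγ _ (μ x y).2
    have hm'N : m' ∈ N := (μ (φ x) (φ y)).2
    have hXN : χ (x * y) ∈ N := hχN _
    have hYN : χ y ∈ N := hχN y
    have hX : χ (x * y) = m' * (c * χ y) * gm⁻¹ := by
      rw [← eq1]; group
    calc m' * gm⁻¹ = c⁻¹ * (c * m') * gm⁻¹ := by group
      _ = c⁻¹ * (m' * c) * gm⁻¹ := by rw [comm c m' hcN hm'N]
      _ = c⁻¹ * (χ y)⁻¹ * (χ y * (m' * c)) * gm⁻¹ := by group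
      _ = c⁻¹ * (χ y)⁻¹ * ((m' * c) * χ y) * gm⁻¹ := by
            rw [comm (χ y) (m' * c) hYN (N.mul_mem hm'N hcN)]
      _ = c⁻¹ * (χ y)⁻¹ * χ (x * y) := by rw [hX]; group
      _ = B⁻¹ * (χ x)⁻¹ * B * (χ y)⁻¹ * χ (x * y) := by rw [hc]; group
end

section
/- Given a triple (θ, φ, χ) ∈ Aut(N) × Aut(H) × {maps H → N with χ(1)=1} satisfying μ(φ(x),φ(y))·θ(μ(x,y))⁻¹ = (χ(x)⁻¹)^{t(φ(y))}·χ(y)⁻¹·χ(xy) and θ(n^{t(x)}) = θ(n)^{t(φ(x))} for all x, y ∈ H, n ∈ N, the map γ defined by γ(t(x)·n) = t(φ(x))·χ(x)·θ(n) is an automorphism of G with γ(N) = N, restricting to θ on N and inducing φ on H. -/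
/-!
Writing elements as `t x * n`, the product is `(t x * n) * (t y * m) = t (x y) * μ(x,y) n^{t y} m`.
Applying `γ` to both sides, the compatibility condition turns `θ (n^{t y})` into `θ(n)^{t (φ y)}`,
and the coboundary condition is exactly what reconciles `θ (μ(x,y))` with `μ(φ x, φ y)` once the
factors in the abelian group `N` are rearranged. Bijectivity of `γ` is inherited from `θ` and `φ`.
-/

open QuotientGroup MulAut

theorem mul_mul_mul_eq_mul_mul_conjNormal_symm {G : Type*} [Group G] {N : Subgroup G} [N.Normal]
    (g h : G) (n m : N) :
    g * n * (h * m) = g * h * ↑((conjNormal h).symm n * m) := by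
  simp only [Subgroup.coe_mul, conjNormal_symm_apply]
  group

section Transversal

variable {G : Type*} [Group G] {N : Subgroup G} {t : G ⧸ N → G}

theorem mk_transversal_mul [N.Normal] (ht : ∀ x : G ⧸ N, (mk (t x) : G ⧸ N) = x)
    (x : G ⧸ N) (n : N) : (mk (t x * n) : G ⧸ N) = x := by
  rw [mk_mul, (eq_one_iff _).mpr n.2, mul_one, ht]

def transversalCoord (ht : ∀ x : G ⧸ N, (mk (t x) : G ⧸ N) = x) (g : G) : N :=
  ⟨(t (mk g))⁻¹ * g, QuotientGroup.eq.mp (ht _)⟩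

theorem transversal_mul_transversalCoord (ht : ∀ x : G ⧸ N, (mk (t x) : G ⧸ N) = x) (g : G) :
    t (mk g) * transversalCoord ht g = g :=
  mul_inv_cancel_left _ _

theorem exists_transversal_mul_eq (ht : ∀ x : G ⧸ N, (mk (t x) : G ⧸ N) = x) (g : G) :
    ∃ (x : G ⧸ N) (n : N), t x * (n : G) = g :=
  ⟨_, _, transversal_mul_transversalCoord ht g⟩

theorem transversalCoord_transversal_mul [N.Normal] (ht : ∀ x : G ⧸ N, (mk (t x) : G ⧸ N) = x)
    (x : G ⧸ N) (n : N) : transversalCoord ht (t x * n) = n := by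
  ext
  simp [transversalCoord, mk_transversal_mul ht]

theorem transversal_mul_mul_transversal_mul [N.Normal] (μ : G ⧸ N → G ⧸ N → N)
    (hμ : ∀ x y : G ⧸ N, t (x * y) * (μ x y : G) = t x * t y) (x y : G ⧸ N) (n m : N) :
    t x * n * (t y * m) = t (x * y) * ↑(μ x y * ((conjNormal (t y)).symm n * m)) := by
  rw [mul_mul_mul_eq_mul_mul_conjNormal_symm, ← hμ]
  simp only [Subgroup.coe_mul, mul_assoc]

/-- The map `t x * n ↦ t (φ x) * χ x * θ n`. -/
def twistedMap [N.Normal] (ht : ∀ x : G ⧸ N, (mk (t x) : G ⧸ N) = x) (θ : N →* N)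
    (φ : G ⧸ N →* G ⧸ N) (χ : G ⧸ N → N) (g : G) : G :=
  t (φ (mk g)) * ↑(χ (mk g) * θ (transversalCoord ht g))

variable [N.Normal] (ht : ∀ x : G ⧸ N, (mk (t x) : G ⧸ N) = x) (θ : N →* N) (φ : G ⧸ N →* G ⧸ N)
  (χ : G ⧸ N → N)

theorem twistedMap_transversal_mul (x : G ⧸ N) (n : N) :
    twistedMap ht θ φ χ (t x * n) = t (φ x) * ↑(χ x * θ n) := by
  rw [twistedMap, mk_transversal_mul ht, transversalCoord_transversal_mul]

theorem mk_twistedMap (g : G) : (mk (twistedMap ht θ φ χ g) : G ⧸ N) = φ (mk g) := by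
  rw [twistedMap, mk_transversal_mul ht]

theorem twistedMap_mul (hcomm : ∀ a b : N, a * b = b * a) (μ : G ⧸ N → G ⧸ N → N)
    (hμ : ∀ x y : G ⧸ N, t (x * y) * (μ x y : G) = t x * t y)
    (hcompat : ∀ (n m : N) (x : G ⧸ N),
      (n : G) = (t x)⁻¹ * (m : G) * t x → (θ n : G) = (t (φ x))⁻¹ * (θ m : G) * t (φ x))
    (hcob : ∀ x y : G ⧸ N,
      (μ (φ x) (φ y) : G) * ((θ (μ x y) : G))⁻¹ =
        ((t (φ y))⁻¹ * ((χ x : G))⁻¹ * t (φ y)) * ((χ y : G))⁻¹ * (χ (x * y) : G))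
    (g h : G) : twistedMap ht θ φ χ (g * h) = twistedMap ht θ φ χ g * twistedMap ht θ φ χ h := by
  let _ : CommGroup N := { mul_comm := hcomm }
  obtain ⟨x, n, rfl⟩ := exists_transversal_mul_eq ht g
  obtain ⟨y, m, rfl⟩ := exists_transversal_mul_eq ht h
  have hθ_conj : θ ((conjNormal (t y)).symm n) = (conjNormal (t (φ y))).symm (θ n) :=
    Subtype.ext <| by rw [conjNormal_symm_apply]; exact hcompat _ n y (conjNormal_symm_apply _ _)
  have hcocycle : χ y * (conjNormal (t (φ y))).symm (χ x) * μ (φ x) (φ y) =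
      χ (x * y) * θ (μ x y) := by
    have hcob_xy := hcob x y
    rw [mul_inv_eq_iff_eq_mul] at hcob_xy
    ext
    simp only [Subgroup.coe_mul, conjNormal_symm_apply, hcob_xy]
    group
  rw [transversal_mul_mul_transversal_mul μ hμ, twistedMap_transversal_mul,
    twistedMap_transversal_mul, twistedMap_transversal_mul,
    mul_mul_mul_eq_mul_mul_conjNormal_symm, ← hμ, ← map_mul, mul_assoc, ← Subgroup.coe_mul]
  congr 2
  calc χ (x * y) * θ (μ x y * ((conjNormal (t y)).symm n * m))
      = χ (x * y) * θ (μ x y) * ((conjNormal (t (φ y))).symm (θ n) * θ m) := by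
        rw [map_mul, map_mul, hθ_conj, mul_assoc]
    _ = χ y * (conjNormal (t (φ y))).symm (χ x) * μ (φ x) (φ y) *
          ((conjNormal (t (φ y))).symm (θ n) * θ m) := by rw [hcocycle]
    _ = μ (φ x) (φ y) * ((conjNormal (t (φ y))).symm (χ x * θ n) * (χ y * θ m)) := by
        rw [map_mul]
        simp only [mul_comm, mul_left_comm]

theorem twistedMap_injective (hθ : Function.Injective θ) (hφ : Function.Injective φ) :
    Function.Injective (twistedMap ht θ φ χ) := by
  intro g h hgh
  obtain ⟨x, n, rfl⟩ := exists_transversal_mul_eq ht g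
  obtain ⟨y, m, rfl⟩ := exists_transversal_mul_eq ht h
  obtain rfl : x = y := hφ <| by
    rw [← mk_transversal_mul ht x n, ← mk_transversal_mul ht y m, ← mk_twistedMap ht θ φ χ, hgh,
      mk_twistedMap ht θ φ χ]
  rw [twistedMap_transversal_mul, twistedMap_transversal_mul] at hgh
  rw [hθ (mul_left_cancel (Subtype.ext (mul_left_cancel hgh)))]

theorem twistedMap_surjective (hθ : Function.Surjective θ) (hφ : Function.Surjective φ) :
    Function.Surjective (twistedMap ht θ φ χ) := by
  intro g
  obtain ⟨y, m, rfl⟩ := exists_transversal_mul_eq ht g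
  obtain ⟨x, rfl⟩ := hφ y
  obtain ⟨n, hn⟩ := hθ ((χ x)⁻¹ * m)
  exact ⟨t x * n, by rw [twistedMap_transversal_mul, hn, mul_inv_cancel_left]⟩

theorem twistedMap_coe (ht1 : t 1 = 1) (hχ1 : χ 1 = 1) (n : N) :
    twistedMap ht θ φ χ n = θ n := by
  have h := twistedMap_transversal_mul ht θ φ χ 1 n
  rwa [map_one, ht1, hχ1, one_mul, one_mul, one_mul] at h

end Transversal

/-- Given a triple (θ, φ, χ) ∈ Aut(N) × Aut(H) × {χ : H → N, χ(1)=1}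
satisfying the twisted coboundary identity and the compatibility condition
θ(n^{t(x)}) = θ(n)^{t(φ(x))}, the map γ(t(x)·n) = t(φ(x))·χ(x)·θ(n) is an
automorphism of G normalizing N, restricting to θ on N and inducing φ on H. -/
theorem stmt_3 {G : Type*} [Group G] (N : Subgroup G) [N.Normal]
    (hcomm : ∀ a b : N, a * b = b * a)
    (t : G ⧸ N → G) (ht : ∀ x : G ⧸ N, (QuotientGroup.mk (t x) : G ⧸ N) = x)
    (ht1 : t 1 = 1)
    (μ : G ⧸ N → G ⧸ N → N)
    (hμ : ∀ x y : G ⧸ N, t (x * y) * (μ x y : G) = t x * t y)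
    (θ : N ≃* N) (φ : G ⧸ N ≃* G ⧸ N) (χ : G ⧸ N → N) (hχ1 : χ 1 = 1)
    (hcompat : ∀ (n m : N) (x : G ⧸ N),
      (n : G) = (t x)⁻¹ * (m : G) * t x →
        (θ n : G) = (t (φ x))⁻¹ * (θ m : G) * t (φ x))
    (hcob : ∀ x y : G ⧸ N,
      (μ (φ x) (φ y) : G) * ((θ (μ x y) : G))⁻¹ =
        ((t (φ y))⁻¹ * ((χ x : G))⁻¹ * t (φ y)) * ((χ y : G))⁻¹ * (χ (x * y) : G)) :
    ∃ γ : G ≃* G,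
      (∀ n : N, γ n = θ n) ∧
      (∀ n ∈ N, γ n ∈ N) ∧
      (∀ g : G, (QuotientGroup.mk (γ g) : G ⧸ N) = φ (QuotientGroup.mk g)) ∧
      ∀ (x : G ⧸ N) (n : N), γ (t x * n) = t (φ x) * (χ x : G) * (θ n : G) := by
  let γ : G ≃* G := MulEquiv.ofBijective
    (MonoidHom.mk' (twistedMap ht θ.toMonoidHom φ.toMonoidHom χ)
      (twistedMap_mul ht _ _ χ hcomm μ hμ hcompat hcob))
    ⟨twistedMap_injective ht _ _ χ θ.injective φ.injective,
      twistedMap_surjective ht _ _ χ θ.surjective φ.surjective⟩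
  have hγ_coe : ∀ n : N, γ n = θ n := twistedMap_coe ht _ _ χ ht1 hχ1
  refine ⟨γ, hγ_coe, fun n hn => hγ_coe ⟨n, hn⟩ ▸ (θ _).2, mk_twistedMap ht _ _ χ,
    fun x n => ?_⟩
  rw [mul_assoc, ← Subgroup.coe_mul]
  exact twistedMap_transversal_mul ht _ _ χ x n
end

section
/- For φ ∈ C₂ (i.e., φ ∈ Aut(H) with n^{φ(x)} = n^x for all n ∈ N, x ∈ H), the map k_φ : H × H → N defined by k_φ(x,y) = μ(φ(x),φ(y))·μ(x,y)⁻¹ is a normalized 2-cocycle with respect to the H-action on N. -/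
/-!
The factor set `μ` of the transversal `t` is a 2-cocycle for the conjugation action of `H` on
the abelian normal subgroup `N`: both sides of the cocycle identity, multiplied on the left by
`t (x * y * z)`, equal `t x * t y * t z`. Precomposing a cocycle with a multiplicative map `φ`
gives a cocycle for the action `z ↦ a (φ z)`, which is the original action when `φ ∈ C₂`. Since
`N` is abelian, the quotient of two cocycles for the same action is again a cocycle, and `k_φ`
is the quotient of `μ ∘ (φ × φ)` by `μ`.
-/

/-- Right-action convention `n ^ z = a z n`, as in the paper; Mathlib's
`groupCohomology.IsMulTwoCocycle` uses left actions. -/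
def IsTwoCocycle {H M : Type*} [Mul H] [Mul M] (a : H → MulAut M) (k : H → H → M) : Prop :=
  ∀ x y z, k (x * y) z * a z (k x y) = k x (y * z) * k y z

namespace IsTwoCocycle

variable {H M : Type*} [Mul H]

theorem div [CommGroup M] {a : H → MulAut M} {μ ν : H → H → M}
    (hν : IsTwoCocycle a ν) (hμ : IsTwoCocycle a μ) :
    IsTwoCocycle a (fun x y => ν x y / μ x y) := by
  intro x y z
  calc ν (x * y) z / μ (x * y) z * a z (ν x y / μ x y)
      = ν (x * y) z * a z (ν x y) / (μ (x * y) z * a z (μ x y)) := by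
        rw [map_div]; exact div_mul_div_comm _ _ _ _
    _ = ν x (y * z) * ν y z / (μ x (y * z) * μ y z) := by rw [hν, hμ]
    _ = ν x (y * z) / μ x (y * z) * (ν y z / μ y z) := div_mul_div_comm _ _ _ _ |>.symm

theorem comp [Mul M] {F : Type*} [FunLike F H H] [MulHomClass F H H] {a : H → MulAut M}
    {μ : H → H → M} (hμ : IsTwoCocycle a μ) (φ : F) (ha : ∀ z, a (φ z) = a z) :
    IsTwoCocycle a (fun x y => μ (φ x) (φ y)) := by
  intro x y z
  simpa only [map_mul, ha] using hμ (φ x) (φ y) (φ z)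

end IsTwoCocycle

section FactorSet

variable {G H : Type*} [Group G] {t : H → G} {μ : H → H → G}

theorem factorSet_cocycle [Semigroup H] (hμ : ∀ x y, t (x * y) * μ x y = t x * t y)
    (x y z : H) : μ (x * y) z * ((t z)⁻¹ * μ x y * t z) = μ x (y * z) * μ y z := by
  apply mul_left_cancel (a := t (x * y * z))
  calc t (x * y * z) * (μ (x * y) z * ((t z)⁻¹ * μ x y * t z))
      = t (x * y * z) * μ (x * y) z * (t z)⁻¹ * μ x y * t z := by group
    _ = t (x * y) * μ x y * t z := by rw [hμ]; group
    _ = t x * (t (y * z) * μ y z) := by rw [hμ, hμ, mul_assoc]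
    _ = t (x * (y * z)) * μ x (y * z) * μ y z := by rw [← mul_assoc, ← hμ]
    _ = t (x * y * z) * (μ x (y * z) * μ y z) := by rw [mul_assoc x y z, mul_assoc]

theorem factorSet_mul_one [MulOneClass H] (ht1 : t 1 = 1)
    (hμ : ∀ x y, t (x * y) * μ x y = t x * t y) (x : H) : μ x 1 = 1 := by
  simpa [ht1] using hμ x 1

theorem factorSet_one_mul [MulOneClass H] (ht1 : t 1 = 1)
    (hμ : ∀ x y, t (x * y) * μ x y = t x * t y) (x : H) : μ 1 x = 1 := by
  simpa [ht1] using hμ 1 x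

end FactorSet

theorem stmt_5_general {G : Type*} [Group G] (N : Subgroup G) [N.Normal]
    (hcomm : ∀ a b : N, a * b = b * a)
    (t : G ⧸ N → G)
    (ht1 : t 1 = 1)
    (μ : G ⧸ N → G ⧸ N → N)
    (hμ : ∀ x y : G ⧸ N, t (x * y) * (μ x y : G) = t x * t y)
    (φ : G ⧸ N ≃* G ⧸ N)
    (hφ : ∀ (n : N) (x : G ⧸ N),
      (t (φ x))⁻¹ * (n : G) * t (φ x) = (t x)⁻¹ * (n : G) * t x) :
    ∃ k : G ⧸ N → G ⧸ N → G,
      (∀ x y : G ⧸ N, k x y = (μ (φ x) (φ y) : G) * ((μ x y : G))⁻¹) ∧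
      (∀ x : G ⧸ N, k x 1 = 1 ∧ k 1 x = 1) ∧
      ∀ x y z : G ⧸ N,
        k (x * y) z * ((t z)⁻¹ * k x y * t z) = k x (y * z) * k y z := by
  let : CommGroup N := { mul_comm := hcomm }
  set a : G ⧸ N → MulAut N := fun z => MulAut.conjNormal (t z)⁻¹
  have coe_a : ∀ z (n : N), (a z n : G) = (t z)⁻¹ * n * t z := by
    simp [a]
  have hμa : IsTwoCocycle a μ := fun x y z =>
    Subtype.ext (by simpa [coe_a] using factorSet_cocycle hμ x y z)
  have hφa : ∀ z, a (φ z) = a z := fun z =>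
    MulEquiv.ext fun n => Subtype.ext <| by rw [coe_a, coe_a, hφ]
  have hk := (hμa.comp φ hφa).div hμa
  have hμ_mul_one : ∀ x, (μ x 1 : G) = 1 := factorSet_mul_one ht1 hμ
  have hμ_one_mul : ∀ x, (μ 1 x : G) = 1 := factorSet_one_mul ht1 hμ
  refine ⟨fun x y => (μ (φ x) (φ y) / μ x y : N), fun x y => ?_, fun x => ?_, fun x y z => ?_⟩
  · simp [div_eq_mul_inv]
  · simp [div_eq_mul_inv, hμ_mul_one, hμ_one_mul]
  · have h := congrArg Subtype.val (hk x y z)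
    rw [Subgroup.coe_mul, Subgroup.coe_mul, coe_a] at h
    exact h

/-- For φ ∈ C₂ (φ ∈ Aut(H) with n^{φ(x)} = n^x for all n ∈ N, x ∈ H),
the map k_φ(x,y) = μ(φ(x),φ(y))·μ(x,y)⁻¹ is a normalized 2-cocycle. -/
theorem stmt_5 {G : Type*} [Group G] (N : Subgroup G) [N.Normal]
    (hcomm : ∀ a b : N, a * b = b * a)
    (t : G ⧸ N → G) (ht : ∀ x : G ⧸ N, (QuotientGroup.mk (t x) : G ⧸ N) = x)
    (ht1 : t 1 = 1)
    (μ : G ⧸ N → G ⧸ N → N)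
    (hμ : ∀ x y : G ⧸ N, t (x * y) * (μ x y : G) = t x * t y)
    (φ : G ⧸ N ≃* G ⧸ N)
    (hφ : ∀ (n : N) (x : G ⧸ N),
      (t (φ x))⁻¹ * (n : G) * t (φ x) = (t x)⁻¹ * (n : G) * t x) :
    ∃ k : G ⧸ N → G ⧸ N → G,
      (∀ x y : G ⧸ N, k x y = (μ (φ x) (φ y) : G) * ((μ x y : G))⁻¹) ∧
      (∀ x : G ⧸ N, k x 1 = 1 ∧ k 1 x = 1) ∧
      ∀ x y z : G ⧸ N,
        k (x * y) z * ((t z)⁻¹ * k x y * t z) = k x (y * z) * k y z :=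
  stmt_5_general N hcomm t ht1 μ hμ φ hφ
end

section
/- There is an exact sequence 1 → Aut^{N,H}(G) → Aut_N^H(G) →^{τ₁} C₁ →^{λ₁} H²(H, N), where τ₁ is restriction to N and λ₁(θ) = [μ·θ(μ)⁻¹]. That is: τ₁ is injective on Aut_N^H(G)/Aut^{N,H}(G) with kernel Aut^{N,H}(G), and the image of τ₁ equals the set of θ ∈ C₁ with λ₁(θ) = 1. -/
/-!
An automorphism `γ` inducing the identity on `G ⧸ N` is recorded by `χ x = (t x)⁻¹ * γ (t x) ∈ N`.
Applying `γ` to `t x * t y = t (x * y) * μ x y` shows that if `γ` restricts to `θ` on `N`, then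
the transversal `x ↦ t x * χ x` has cocycle `θ ∘ μ`; for abelian `N` this is exactly the
statement that `μ * (θ ∘ μ)⁻¹` is the coboundary of `χ`. Conversely, for such a `χ` the map
`t x * n ↦ t x * (χ x * θ n)` is multiplicative because `θ` commutes with the conjugation action
of the transversal, and a map of the same shape built from `θ⁻¹` inverts it.
-/

namespace QuotientGroup

variable {G : Type*} [Group G] {N : Subgroup G}

theorem map_mem_of_mk_map_eq [N.Normal] {f : G → G} (hf : ∀ g, (f g : G ⧸ N) = g) {n : G}
    (hn : n ∈ N) : f n ∈ N := by
  rwa [← eq_one_iff, hf, eq_one_iff]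

section Transversal

variable {t : G ⧸ N → G}

def transversalOffset (ht : ∀ x, (t x : G ⧸ N) = x) (g : G) : N :=
  ⟨(t g)⁻¹ * g, QuotientGroup.eq.mp (ht g)⟩

theorem transversal_mul_transversalOffset (ht : ∀ x, (t x : G ⧸ N) = x) (g : G) :
    t g * transversalOffset ht g = g :=
  mul_inv_cancel_left _ _

theorem exists_eq_transversal_mul (ht : ∀ x, (t x : G ⧸ N) = x) (g : G) :
    ∃ x, ∃ n : N, g = t x * n :=
  ⟨g, _, (transversal_mul_transversalOffset ht g).symm⟩

theorem mk_transversal_mul (ht : ∀ x, (t x : G ⧸ N) = x) (x : G ⧸ N) (n : N) :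
    ((t x * n : G) : G ⧸ N) = x :=
  (QuotientGroup.eq.mpr (by simp)).symm.trans (ht x)

theorem transversalOffset_transversal_mul (ht : ∀ x, (t x : G ⧸ N) = x) (x : G ⧸ N) (n : N) :
    transversalOffset ht (t x * n) = n := by
  apply Subtype.ext
  simp [transversalOffset, mk_transversal_mul ht]

def twist (ht : ∀ x, (t x : G ⧸ N) = x) (χ : G ⧸ N → N) (φ : N → N) (g : G) : G :=
  t g * (χ g * φ (transversalOffset ht g) : N)

theorem twist_transversal_mul (ht : ∀ x, (t x : G ⧸ N) = x) (χ : G ⧸ N → N) (φ : N → N)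
    (x : G ⧸ N) (n : N) : twist ht χ φ (t x * n) = t x * (χ x * φ n : N) := by
  rw [twist, mk_transversal_mul ht, transversalOffset_transversal_mul ht]

theorem mk_twist (ht : ∀ x, (t x : G ⧸ N) = x) (χ : G ⧸ N → N) (φ : N → N) (g : G) :
    ((twist ht χ φ g : G) : G ⧸ N) = g :=
  mk_transversal_mul ht _ _

theorem leftInverse_twist (ht : ∀ x, (t x : G ⧸ N) = x) (χ : G ⧸ N → N) (θ : N ≃* N) :
    Function.LeftInverse (twist ht (fun x => (θ.symm (χ x))⁻¹) θ.symm) (twist ht χ θ) := by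
  intro g
  obtain ⟨x, n, rfl⟩ := exists_eq_transversal_mul ht g
  rw [twist_transversal_mul ht, twist_transversal_mul ht]
  simp

theorem rightInverse_twist (ht : ∀ x, (t x : G ⧸ N) = x) (χ : G ⧸ N → N) (θ : N ≃* N) :
    Function.RightInverse (twist ht (fun x => (θ.symm (χ x))⁻¹) θ.symm) (twist ht χ θ) := by
  intro g
  obtain ⟨x, n, rfl⟩ := exists_eq_transversal_mul ht g
  rw [twist_transversal_mul ht, twist_transversal_mul ht]
  simp

end Transversal

section Cocycle

variable [N.Normal] {t : G ⧸ N → G} {μ : G ⧸ N → G ⧸ N → N}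

theorem transversal_mul_mul_transversal_mul (hμ : ∀ x y, t (x * y) * (μ x y : G) = t x * t y)
    (x y : G ⧸ N) (n m : N) :
    t x * n * (t y * m) = t (x * y) * (μ x y * MulAut.conjNormal (t y)⁻¹ n * m : N) := by
  simp only [Subgroup.coe_mul, MulAut.conjNormal_apply, ← mul_assoc, hμ]
  group

/-- The transversal `x ↦ t x * χ x` has cocycle `μ'`. -/
def IsCohomologousVia (t : G ⧸ N → G) (μ μ' : G ⧸ N → G ⧸ N → N) (χ : G ⧸ N → N) : Prop :=
  ∀ x y, χ (x * y) * μ' x y = μ x y * MulAut.conjNormal (t y)⁻¹ (χ x) * χ y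

theorem isCohomologousVia_iff [IsMulCommutative N] {μ' : G ⧸ N → G ⧸ N → N} {χ : G ⧸ N → N} :
    IsCohomologousVia t μ μ' χ ↔ ∀ x y, (μ x y : G) * (μ' x y : G)⁻¹ =
      (t y)⁻¹ * (χ x : G)⁻¹ * t y * (χ y : G)⁻¹ * χ (x * y) := by
  refine forall₂_congr fun x y => ?_
  have : (t y)⁻¹ * (χ x : G)⁻¹ * t y * (χ y : G)⁻¹ * χ (x * y) =
      ((MulAut.conjNormal (t y)⁻¹ (χ x))⁻¹ * (χ y)⁻¹ * χ (x * y) : N) := by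
    simp [mul_assoc]
  rw [this, ← Subgroup.coe_inv, ← Subgroup.coe_mul, Subtype.coe_inj, mul_inv_eq_iff_eq_mul,
    ← mul_inv_rev, mul_assoc _ (χ _), eq_inv_mul_iff_mul_eq,
    show χ y * _ * μ x y = μ x y * MulAut.conjNormal (t y)⁻¹ (χ x) * χ y by ac_rfl]
  exact eq_comm

def displacement (t : G ⧸ N → G) (γ : G →* G) (hγ : ∀ g, (γ g : G ⧸ N) = g) (x : G ⧸ N) : N :=
  ⟨(t x)⁻¹ * γ (t x), QuotientGroup.eq.mp (hγ (t x)).symm⟩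

theorem isCohomologousVia_displacement (hμ : ∀ x y, t (x * y) * (μ x y : G) = t x * t y)
    {γ : G →* G} (hγ : ∀ g, (γ g : G ⧸ N) = g) {θ : N → N} (hθ : ∀ n : N, γ n = θ n) :
    IsCohomologousVia t μ (fun x y => θ (μ x y)) (displacement t γ hγ) := by
  intro x y
  have htxy : t (x * y) = t x * t y * (μ x y : G)⁻¹ := eq_mul_inv_of_mul_eq (hμ x y)
  apply Subtype.ext
  simp only [displacement, Subgroup.coe_mul, MulAut.conjNormal_apply, inv_inv]
  rw [mul_assoc, ← hθ, ← map_mul, hμ, map_mul, htxy]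
  group

theorem displacement_one (ht1 : t 1 = 1) {γ : G →* G} (hγ : ∀ g, (γ g : G ⧸ N) = g) :
    displacement t γ hγ 1 = 1 := by
  apply Subtype.ext
  simp [displacement, ht1]

theorem twist_coe (ht : ∀ x, (t x : G ⧸ N) = x) (ht1 : t 1 = 1) {χ : G ⧸ N → N} (hχ1 : χ 1 = 1)
    (φ : N → N) (n : N) : twist ht χ φ n = φ n := by
  simpa [ht1, hχ1] using twist_transversal_mul ht χ φ 1 n

theorem twist_mul [IsMulCommutative N] (ht : ∀ x, (t x : G ⧸ N) = x)
    (hμ : ∀ x y, t (x * y) * (μ x y : G) = t x * t y) {F : Type*} [FunLike F N N]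
    [MonoidHomClass F N N] {θ : F}
    (hθ : ∀ x n, θ (MulAut.conjNormal (t x)⁻¹ n) = MulAut.conjNormal (t x)⁻¹ (θ n))
    {χ : G ⧸ N → N} (hχ : IsCohomologousVia t μ (fun x y => θ (μ x y)) χ) (g h : G) :
    twist ht χ θ (g * h) = twist ht χ θ g * twist ht χ θ h := by
  obtain ⟨x, n, rfl⟩ := exists_eq_transversal_mul ht g
  obtain ⟨y, m, rfl⟩ := exists_eq_transversal_mul ht h
  simp only [transversal_mul_mul_transversal_mul hμ, twist_transversal_mul ht, map_mul, hθ]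
  congr 2
  rw [show χ (x * y) * (θ (μ x y) * MulAut.conjNormal (t y)⁻¹ (θ n) * θ m) =
      χ (x * y) * θ (μ x y) * (MulAut.conjNormal (t y)⁻¹ (θ n) * θ m) by ac_rfl, hχ x y]
  ac_rfl

def twistEquiv [IsMulCommutative N] (ht : ∀ x, (t x : G ⧸ N) = x)
    (hμ : ∀ x y, t (x * y) * (μ x y : G) = t x * t y) (θ : N ≃* N)
    (hθ : ∀ x n, θ (MulAut.conjNormal (t x)⁻¹ n) = MulAut.conjNormal (t x)⁻¹ (θ n))
    {χ : G ⧸ N → N} (hχ : IsCohomologousVia t μ (fun x y => θ (μ x y)) χ) : G ≃* G :=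
  MulEquiv.mk' ⟨twist ht χ θ, twist ht (fun x => (θ.symm (χ x))⁻¹) θ.symm,
    leftInverse_twist ht χ θ, rightInverse_twist ht χ θ⟩ (twist_mul ht hμ hθ hχ)

end Cocycle

end QuotientGroup

/-- Exactness of
1 → Aut^{N,H}(G) → Aut_N^H(G) →^{τ₁} C₁ →^{λ₁} H²(H,N):
any automorphism inducing the identity on H normalizes N, and θ ∈ C₁ is the
restriction of some automorphism of G normalizing N and inducing the identity on
H = G/N if and only if λ₁(θ) = [k_θ] is trivial, i.e. k_θ(x,y) = μ(x,y)·θ(μ(x,y))⁻¹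
is the 2-coboundary (χ(x)⁻¹)^{t(y)}·χ(y)⁻¹·χ(xy) of some χ : H → N with χ(1)=1. -/
theorem stmt_8 {G : Type*} [Group G] (N : Subgroup G) [N.Normal]
    (hcomm : ∀ a b : N, a * b = b * a)
    (t : G ⧸ N → G) (ht : ∀ x : G ⧸ N, (QuotientGroup.mk (t x) : G ⧸ N) = x)
    (ht1 : t 1 = 1)
    (μ : G ⧸ N → G ⧸ N → N)
    (hμ : ∀ x y : G ⧸ N, t (x * y) * (μ x y : G) = t x * t y)
    (θ : N ≃* N)
    (hθ : ∀ (n m : N) (x : G ⧸ N),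
      (n : G) = (t x)⁻¹ * (m : G) * t x →
        (θ n : G) = (t x)⁻¹ * (θ m : G) * t x) :
    (∀ γ : G ≃* G,
      (∀ g : G, (QuotientGroup.mk (γ g) : G ⧸ N) = QuotientGroup.mk g) →
        ∀ n ∈ N, γ n ∈ N) ∧
    ((∃ γ : G ≃* G,
        (∀ n ∈ N, γ n ∈ N) ∧
        (∀ n : N, γ n = (θ n : G)) ∧
        (∀ g : G, (QuotientGroup.mk (γ g) : G ⧸ N) = QuotientGroup.mk g)) ↔
      ∃ χ : G ⧸ N → N, χ 1 = 1 ∧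
        ∀ x y : G ⧸ N,
          (μ x y : G) * ((θ (μ x y) : G))⁻¹ =
            ((t y)⁻¹ * ((χ x : G))⁻¹ * t y) * ((χ y : G))⁻¹ * (χ (x * y) : G)) := by
  open QuotientGroup in
  have : IsMulCommutative N := .of_comm hcomm
  have hθ_conj : ∀ x n, θ (MulAut.conjNormal (t x)⁻¹ n) = MulAut.conjNormal (t x)⁻¹ (θ n) :=
    fun x n => Subtype.ext ((hθ _ n x (by simp)).trans (by simp))
  refine ⟨fun γ hγ n => map_mem_of_mk_map_eq hγ, ?_⟩
  simp only [← isCohomologousVia_iff]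
  constructor
  · rintro ⟨γ, -, hres, hγ⟩
    exact ⟨displacement t γ.toMonoidHom hγ, displacement_one ht1 _,
      isCohomologousVia_displacement hμ hγ hres⟩
  · rintro ⟨χ, hχ1, hχ⟩
    exact ⟨twistEquiv ht hμ θ hθ_conj hχ, fun _ => map_mem_of_mk_map_eq (mk_twist ht χ θ),
      twist_coe ht ht1 hχ1 θ, mk_twist ht χ θ⟩
end

section
/- There is an exact sequence 1 → Aut^{N,H}(G) → Aut^N(G) →^{τ₂} C₂ →^{λ₂} H²(H, N): an automorphism φ ∈ C₂ is induced by some automorphism of G centralizing N if and only if the class λ₂(φ) = [μ(φ(·),φ(·))·μ(·,·)⁻¹] is trivial in H²(H, N). -/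
private lemma stmt9_aux {M : Type*} [CommGroup M] (a b c d e : M)
    (h : a⁻¹ * (c * b) = d * e) : a * b⁻¹ = d⁻¹ * e⁻¹ * c := by
  have hc : c = a * (d * e) * b⁻¹ := by rw [← h]; group
  rw [hc]
  have : d⁻¹ * e⁻¹ * (a * (d * e) * b⁻¹) = a * b⁻¹ * (d⁻¹ * d) * (e⁻¹ * e) := by ac_rfl
  rw [this]; simp

private lemma stmt9_aux2 {M : Type*} [CommGroup M] (a b c d e : M)
    (h : a * b⁻¹ = d⁻¹ * e⁻¹ * c) : a⁻¹ * (c * b) = d * e := by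
  have hc : c = e * (d * (a * b⁻¹)) := by rw [h]; group
  rw [hc]
  have : a⁻¹ * (e * (d * (a * b⁻¹)) * b) = (a⁻¹ * a) * ((b⁻¹ * b) * (d * e)) := by ac_rfl
  rw [this]; simp

private lemma stmt9_conj_mem {G : Type*} [Group G] (N : Subgroup G) [hN : N.Normal]
    {n : G} (hn : n ∈ N) (g : G) : g⁻¹ * n * g ∈ N := by
  simpa using hN.conj_mem n hn g⁻¹


/-- Exactness of
1 → Aut^{N,H}(G) → Aut^N(G) →^{τ₂} C₂ →^{λ₂} H²(H,N):
φ ∈ C₂ is induced by an automorphism of G centralizing N if and only if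
λ₂(φ) = [k_φ] is trivial, i.e. k_φ(x,y) = μ(φ(x),φ(y))·μ(x,y)⁻¹ is the
2-coboundary (χ(x)⁻¹)^{t(φ(y))}·χ(y)⁻¹·χ(xy) of some χ : H → N with χ(1)=1. -/
theorem stmt_9 {G : Type*} [Group G] (N : Subgroup G) [N.Normal]
    (hcomm : ∀ a b : N, a * b = b * a)
    (t : G ⧸ N → G) (ht : ∀ x : G ⧸ N, (QuotientGroup.mk (t x) : G ⧸ N) = x)
    (ht1 : t 1 = 1)
    (μ : G ⧸ N → G ⧸ N → N)
    (hμ : ∀ x y : G ⧸ N, t (x * y) * (μ x y : G) = t x * t y)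
    (φ : G ⧸ N ≃* G ⧸ N)
    (hφ : ∀ (n : N) (x : G ⧸ N),
      (t (φ x))⁻¹ * (n : G) * t (φ x) = (t x)⁻¹ * (n : G) * t x) :
    (∃ γ : G ≃* G,
        (∀ n ∈ N, γ n = n) ∧
        (∀ g : G, (QuotientGroup.mk (γ g) : G ⧸ N) = φ (QuotientGroup.mk g))) ↔
      ∃ χ : G ⧸ N → N, χ 1 = 1 ∧
        ∀ x y : G ⧸ N,
          (μ (φ x) (φ y) : G) * ((μ x y : G))⁻¹ =
            ((t (φ y))⁻¹ * ((χ x : G))⁻¹ * t (φ y)) * ((χ y : G))⁻¹ *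
              (χ (x * y) : G) := by
  letI : CommGroup ↥N := { (inferInstance : Group ↥N) with mul_comm := hcomm }
  have hcomm' : ∀ p q : G, p ∈ N → q ∈ N → p * q = q * p := fun p q hp hq =>
    congrArg Subtype.val (hcomm ⟨p, hp⟩ ⟨q, hq⟩)
  constructor
  · rintro ⟨γ, hN, hind⟩
    have hmem : ∀ x : G ⧸ N, (t (φ x))⁻¹ * γ (t x) ∈ N := by
      intro x
      exact QuotientGroup.eq.mp (by rw [ht, hind, ht])
    refine ⟨fun x => ⟨(t (φ x))⁻¹ * γ (t x), hmem x⟩, ?_, ?_⟩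
    · apply Subtype.ext
      show (t (φ 1))⁻¹ * γ (t 1) = ((1 : ↥N) : G)
      rw [map_one φ, ht1, map_one γ]
      simp
    · intro x y
      obtain ⟨cx, hcx⟩ : ∃ c : ↥N, (c : G) = (t (φ x))⁻¹ * γ (t x) := ⟨⟨_, hmem x⟩, rfl⟩
      obtain ⟨cy, hcy⟩ : ∃ c : ↥N, (c : G) = (t (φ y))⁻¹ * γ (t y) := ⟨⟨_, hmem y⟩, rfl⟩
      obtain ⟨cxy, hcxy⟩ : ∃ c : ↥N, (c : G) = (t (φ (x * y)))⁻¹ * γ (t (x * y)) :=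
        ⟨⟨_, hmem (x * y)⟩, rfl⟩
      obtain ⟨dd, hdd⟩ : ∃ d : ↥N, (d : G) = (t (φ y))⁻¹ * (cx : G) * t (φ y) :=
        ⟨⟨_, stmt9_conj_mem N cx.2 _⟩, rfl⟩
      show (μ (φ x) (φ y) : G) * ((μ x y : G))⁻¹ =
          ((t (φ y))⁻¹ * ((t (φ x))⁻¹ * γ (t x))⁻¹ * t (φ y)) * ((t (φ y))⁻¹ * γ (t y))⁻¹ *
            ((t (φ (x * y)))⁻¹ * γ (t (x * y)))
      rw [← hcx, ← hcy, ← hcxy]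
      have bigG : t (φ (x * y)) * ((cxy : G) * (μ x y : G))
          = (t (φ x) * (cx : G)) * (t (φ y) * (cy : G)) := by
        rw [hcx, hcy, hcxy]
        have e : γ (t (x * y)) * (μ x y : G) = γ (t x) * γ (t y) := by
          rw [← map_mul γ (t x) (t y), ← hμ x y, map_mul γ, hN _ (μ x y).2]
        calc t (φ (x * y)) * (((t (φ (x * y)))⁻¹ * γ (t (x * y))) * (μ x y : G))
            = γ (t (x * y)) * (μ x y : G) := by group
          _ = γ (t x) * γ (t y) := e
          _ = (t (φ x) * ((t (φ x))⁻¹ * γ (t x))) * (t (φ y) * ((t (φ y))⁻¹ * γ (t y))) := by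
              group
      have hsplit : t (φ (x * y)) = t (φ x) * t (φ y) * (μ (φ x) (φ y) : G)⁻¹ := by
        rw [map_mul φ x y, ← hμ (φ x) (φ y)]; group
      have e3 : t (φ x) * (t (φ y) * ((μ (φ x) (φ y) : G)⁻¹ * ((cxy : G) * (μ x y : G))))
          = t (φ x) * (t (φ y) * ((dd : G) * (cy : G))) := by
        rw [hdd]
        calc t (φ x) * (t (φ y) * ((μ (φ x) (φ y) : G)⁻¹ * ((cxy : G) * (μ x y : G))))
            = t (φ (x * y)) * ((cxy : G) * (μ x y : G)) := by rw [hsplit]; group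
          _ = (t (φ x) * (cx : G)) * (t (φ y) * (cy : G)) := bigG
          _ = t (φ x) * (t (φ y) * (((t (φ y))⁻¹ * (cx : G) * t (φ y)) * (cy : G))) := by group
      have e4 := mul_left_cancel (mul_left_cancel e3)
      have e5 : (μ (φ x) (φ y))⁻¹ * (cxy * μ x y) = dd * cy := by
        apply Subtype.ext; push_cast; exact e4
      have e6 : μ (φ x) (φ y) * (μ x y)⁻¹ = dd⁻¹ * cy⁻¹ * cxy := stmt9_aux _ _ _ _ _ e5
      have e7 := congrArg (Subtype.val : ↥N → G) e6
      push_cast at e7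
      rw [e7, hdd]
      group
  · rintro ⟨χ, hχ1, hk⟩
    have hmem2 : ∀ g : G, (t (QuotientGroup.mk g))⁻¹ * g ∈ N := fun g =>
      QuotientGroup.eq.mp (ht _)
    have keyG : ∀ x y : G ⧸ N,
        (μ (φ x) (φ y) : G)⁻¹ * ((χ (x * y) : G) * (μ x y : G))
          = (t (φ y))⁻¹ * (χ x : G) * t (φ y) * (χ y : G) := by
      intro x y
      obtain ⟨dd, hdd⟩ : ∃ d : ↥N, (d : G) = (t (φ y))⁻¹ * (χ x : G) * t (φ y) :=
        ⟨⟨_, stmt9_conj_mem N (χ x).2 _⟩, rfl⟩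
      have hkN : μ (φ x) (φ y) * (μ x y)⁻¹ = dd⁻¹ * (χ y)⁻¹ * χ (x * y) := by
        apply Subtype.ext; push_cast; rw [hk x y, hdd]; group
      have h2 := congrArg (Subtype.val : ↥N → G) (stmt9_aux2 _ _ _ _ _ hkN)
      push_cast at h2
      rw [h2, hdd]
    set f : G → G := fun g =>
      t (φ (QuotientGroup.mk g)) *
        ((χ (QuotientGroup.mk g) : G) * ((t (QuotientGroup.mk g))⁻¹ * g)) with hf
    have hfmk : ∀ g : G, (QuotientGroup.mk (f g) : G ⧸ N) = φ (QuotientGroup.mk g) := by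
      intro g
      have h1 : (QuotientGroup.mk ((χ (QuotientGroup.mk g) : G) *
          ((t (QuotientGroup.mk g))⁻¹ * g)) : G ⧸ N) = 1 :=
        (QuotientGroup.eq_one_iff _).mpr (N.mul_mem (χ _).2 (hmem2 g))
      show (QuotientGroup.mk (t (φ (QuotientGroup.mk g)) *
          ((χ (QuotientGroup.mk g) : G) * ((t (QuotientGroup.mk g))⁻¹ * g))) : G ⧸ N) = _
      rw [QuotientGroup.mk_mul, h1, mul_one, ht]
    have hfN : ∀ n ∈ N, f n = n := by
      intro n hn
      have h1 : (QuotientGroup.mk n : G ⧸ N) = 1 := (QuotientGroup.eq_one_iff n).mpr hn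
      show t (φ (QuotientGroup.mk n)) *
          ((χ (QuotientGroup.mk n) : G) * ((t (QuotientGroup.mk n))⁻¹ * n)) = n
      rw [h1, map_one φ, ht1, hχ1]
      simp
    have hmul : ∀ g h : G, f (g * h) = f g * f h := by
      intro g h
      have ha := hmem2 g
      have hA : (t (QuotientGroup.mk h))⁻¹ * ((t (QuotientGroup.mk g))⁻¹ * g) *
            t (QuotientGroup.mk h)
          = (t (φ (QuotientGroup.mk h)))⁻¹ * ((t (QuotientGroup.mk g))⁻¹ * g) *
            t (φ (QuotientGroup.mk h)) := (hφ ⟨_, ha⟩ (QuotientGroup.mk h)).symm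
      have hAm : (t (φ (QuotientGroup.mk h)))⁻¹ * ((t (QuotientGroup.mk g))⁻¹ * g) *
          t (φ (QuotientGroup.mk h)) ∈ N := stmt9_conj_mem N ha _
      have hswap : (χ (QuotientGroup.mk h) : G) *
            ((t (φ (QuotientGroup.mk h)))⁻¹ * ((t (QuotientGroup.mk g))⁻¹ * g) *
              t (φ (QuotientGroup.mk h)))
          = ((t (φ (QuotientGroup.mk h)))⁻¹ * ((t (QuotientGroup.mk g))⁻¹ * g) *
              t (φ (QuotientGroup.mk h))) * (χ (QuotientGroup.mk h) : G) :=
        hcomm' _ _ (χ _).2 hAm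
      have hsplit : t (QuotientGroup.mk g * QuotientGroup.mk h)
          = t (QuotientGroup.mk g) * t (QuotientGroup.mk h) *
            (μ (QuotientGroup.mk g) (QuotientGroup.mk h) : G)⁻¹ := by
        rw [← hμ]; group
      have hsplitφ : t (φ (QuotientGroup.mk g) * φ (QuotientGroup.mk h))
          = t (φ (QuotientGroup.mk g)) * t (φ (QuotientGroup.mk h)) *
            (μ (φ (QuotientGroup.mk g)) (φ (QuotientGroup.mk h)) : G)⁻¹ := by
        rw [← hμ]; group
      show t (φ (QuotientGroup.mk (g * h))) *
          ((χ (QuotientGroup.mk (g * h)) : G) * ((t (QuotientGroup.mk (g * h)))⁻¹ * (g * h)))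
        = (t (φ (QuotientGroup.mk g)) *
            ((χ (QuotientGroup.mk g) : G) * ((t (QuotientGroup.mk g))⁻¹ * g))) *
          (t (φ (QuotientGroup.mk h)) *
            ((χ (QuotientGroup.mk h) : G) * ((t (QuotientGroup.mk h))⁻¹ * h)))
      rw [show (QuotientGroup.mk (g * h) : G ⧸ N)
            = QuotientGroup.mk g * QuotientGroup.mk h from QuotientGroup.mk_mul N g h]
      set X := (QuotientGroup.mk g : G ⧸ N)
      set Y := (QuotientGroup.mk h : G ⧸ N)
      calc t (φ (X * Y)) * ((χ (X * Y) : G) * ((t (X * Y))⁻¹ * (g * h)))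
          = (t (φ X) * t (φ Y) * (μ (φ X) (φ Y) : G)⁻¹) *
              ((χ (X * Y) : G) * ((t X * t Y * (μ X Y : G)⁻¹)⁻¹ * (g * h))) := by
            rw [map_mul φ, hsplitφ, hsplit]
        _ = t (φ X) * (t (φ Y) * (((μ (φ X) (φ Y) : G)⁻¹ * ((χ (X * Y) : G) * (μ X Y : G))) *
              (((t Y)⁻¹ * ((t X)⁻¹ * g) * t Y) * ((t Y)⁻¹ * h)))) := by group
        _ = t (φ X) * (t (φ Y) * (((t (φ Y))⁻¹ * (χ X : G) * t (φ Y) * (χ Y : G)) *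
              (((t (φ Y))⁻¹ * ((t X)⁻¹ * g) * t (φ Y)) * ((t Y)⁻¹ * h)))) := by
            rw [keyG X Y, hA]
        _ = t (φ X) * (t (φ Y) * ((t (φ Y))⁻¹ * (χ X : G) * t (φ Y) *
              (((χ Y : G) * ((t (φ Y))⁻¹ * ((t X)⁻¹ * g) * t (φ Y))) * ((t Y)⁻¹ * h)))) := by
            group
        _ = t (φ X) * (t (φ Y) * ((t (φ Y))⁻¹ * (χ X : G) * t (φ Y) *
              ((((t (φ Y))⁻¹ * ((t X)⁻¹ * g) * t (φ Y)) * (χ Y : G)) * ((t Y)⁻¹ * h)))) := by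
            rw [hswap]
        _ = (t (φ X) * ((χ X : G) * ((t X)⁻¹ * g))) *
              (t (φ Y) * ((χ Y : G) * ((t Y)⁻¹ * h))) := by group
    let F : G →* G := MonoidHom.mk' f hmul
    have hinj : Function.Injective F := by
      apply (injective_iff_map_eq_one F).mpr
      intro g hg
      have h1 : φ (QuotientGroup.mk g) = 1 := by
        rw [← hfmk g]
        show (QuotientGroup.mk (F g) : G ⧸ N) = 1
        rw [hg, QuotientGroup.mk_one]
      have h2 : (QuotientGroup.mk g : G ⧸ N) = 1 := by
        apply φ.injective
        rw [h1, map_one]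
      have h3 : g ∈ N := (QuotientGroup.eq_one_iff g).mp h2
      have := hfN g h3
      rw [← this]
      exact hg
    have hsurj : Function.Surjective F := by
      intro w
      refine ⟨t (φ.symm (QuotientGroup.mk w)) *
        ((χ (φ.symm (QuotientGroup.mk w)) : G)⁻¹ * ((t (QuotientGroup.mk w))⁻¹ * w)), ?_⟩
      have h1 : (QuotientGroup.mk ((χ (φ.symm (QuotientGroup.mk w)) : G)⁻¹ *
          ((t (QuotientGroup.mk w))⁻¹ * w)) : G ⧸ N) = 1 :=
        (QuotientGroup.eq_one_iff _).mpr (N.mul_mem (N.inv_mem (χ _).2) (hmem2 w))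
      have hgy : (QuotientGroup.mk (t (φ.symm (QuotientGroup.mk w)) *
          ((χ (φ.symm (QuotientGroup.mk w)) : G)⁻¹ * ((t (QuotientGroup.mk w))⁻¹ * w)))
          : G ⧸ N) = φ.symm (QuotientGroup.mk w) := by
        rw [QuotientGroup.mk_mul, h1, mul_one, ht]
      show f _ = w
      rw [hf]
      simp only []
      rw [hgy, φ.apply_symm_apply]
      group
    refine ⟨MulEquiv.ofBijective F ⟨hinj, hsurj⟩, fun n hn => hfN n hn, fun g => hfmk g⟩
end

section
/- If G is finite, N an abelian normal subgroup, and the map n ↦ n^{|G/N|} is an automorphism of N (e.g., gcd(|N|, |G/N|) = 1), then every compatible θ ∈ C₁ extends to an automorphism of G centralizing G/N, and every φ ∈ C₂ lifts to an automorphism of G centralizing N. -/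
/-!
Fix a section `t` of `G → G ⧸ N`; its factor set `f(x, y) = t x * t y * (t (x * y))⁻¹` is a
2-cocycle of `G ⧸ N` with values in `N`. For a compatible pair `(θ, ψ)`, the function
`θ ∘ f ∘ (ψ⁻¹ × ψ⁻¹)` is again a 2-cocycle, so its quotient by `f` is a 2-cocycle, hence a
coboundary `∂c`: taking the product of the cocycle identity over one variable shows that
`f ^ |G ⧸ N|` is the coboundary of `x ↦ ∏ z, f(x, z)`, and `|G ⧸ N|`-th roots exist uniquely in
`N`. Then `s = c * t` is a section with factor set `θ ∘ f ∘ (ψ⁻¹ × ψ⁻¹)`, and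
`n * t x ↦ θ n * s (ψ x)` is an automorphism of `G` inducing `θ` on `N` and `ψ` on `G ⧸ N`.
-/

namespace groupCohomology

variable {H M : Type*} [Group H] [CommGroup M] [MulDistribMulAction H M] {f g : H × H → M}

theorem IsMulCocycle₂.div (hf : IsMulCocycle₂ f) (hg : IsMulCocycle₂ g) :
    IsMulCocycle₂ (f / g) := by
  intro x y z
  simp only [Pi.div_apply, smul_div', hf x y z, hg x y z, div_mul_div_comm]

theorem IsMulCocycle₂.map_mulEquiv (hf : IsMulCocycle₂ f) (θ : M ≃* M) (ψ : H ≃* H)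
    (hθψ : ∀ x m, θ (x • m) = ψ x • θ m) :
    IsMulCocycle₂ fun p => θ (f (ψ.symm p.1, ψ.symm p.2)) := by
  intro x y z
  have := congrArg θ (hf (ψ.symm x) (ψ.symm y) (ψ.symm z))
  simpa only [map_mul, hθψ, MulEquiv.apply_symm_apply] using this

theorem IsMulCocycle₂.isMulCoboundary₂_pow_card [Finite H] (hf : IsMulCocycle₂ f) :
    IsMulCoboundary₂ (f ^ Nat.card H) := by
  have := Fintype.ofFinite H
  refine ⟨fun x => ∏ z, f (x, z), fun x y => ?_⟩
  have hprod := Finset.prod_congr rfl fun z (_ : z ∈ Finset.univ) => hf x y z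
  rw [Finset.prod_mul_distrib, Finset.prod_mul_distrib, Finset.prod_const, Finset.card_univ,
    ← Finset.smul_prod', Fintype.prod_equiv (Equiv.mulLeft y) (fun z => f (x, y * z))
      (fun z => f (x, z)) fun _ => rfl] at hprod
  rw [Pi.pow_apply, Nat.card_eq_fintype_card, div_mul_eq_mul_div, div_eq_iff_eq_mul, ← hprod,
    mul_comm]

theorem IsMulCocycle₂.isMulCoboundary₂_of_bijective_pow [Finite H]
    (hpow : Function.Bijective fun m : M => m ^ Nat.card H) (hf : IsMulCocycle₂ f) :
    IsMulCoboundary₂ f := by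
  obtain ⟨e, he⟩ := hf.isMulCoboundary₂_pow_card
  let root := (MulEquiv.ofBijective (powMonoidHom (Nat.card H)) hpow).symm
  have hroot : ∀ m, root m ^ Nat.card H = m :=
    (MulEquiv.ofBijective (powMonoidHom (Nat.card H)) hpow).apply_symm_apply
  refine ⟨fun x => root (e x), fun x y => hpow.1 ?_⟩
  simp only [div_pow, mul_pow, ← smul_pow', hroot]
  exact he x y

end groupCohomology

open groupCohomology
open scoped IsMulCommutative

namespace Subgroup

variable {G : Type*} [Group G] {N : Subgroup G} [N.Normal]

@[simp]
theorem mk_coe_eq_one (n : N) : ((n : G) : G ⧸ N) = 1 :=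
  (QuotientGroup.eq_one_iff _).mpr n.2

section Transversal

variable {t : G ⧸ N → G} (ht : ∀ x, (t x : G ⧸ N) = x)

def factorSet (p : (G ⧸ N) × (G ⧸ N)) : N :=
  ⟨t p.1 * t p.2 * (t (p.1 * p.2))⁻¹, by rw [← QuotientGroup.eq_one_iff]; simp [ht]⟩

@[simp]
theorem coe_factorSet (p : (G ⧸ N) × (G ⧸ N)) :
    (factorSet ht p : G) = t p.1 * t p.2 * (t (p.1 * p.2))⁻¹ := rfl

def sectionEquiv : G ≃ N × (G ⧸ N) where
  toFun g := (⟨g * (t g)⁻¹, by rw [← QuotientGroup.eq_one_iff]; simp [ht]⟩, g)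
  invFun p := p.1 * t p.2
  left_inv g := by simp
  right_inv p := by ext <;> simp [ht]

@[simp]
theorem coe_sectionEquiv_fst (g : G) : ((sectionEquiv ht g).1 : G) = g * (t g)⁻¹ := rfl

@[simp]
theorem sectionEquiv_snd (g : G) : (sectionEquiv ht g).2 = g := rfl

include ht in
theorem mk_mul_section (c : G ⧸ N → N) : ∀ x, ((c x * t x : G) : G ⧸ N) = x := by
  simp [ht]

theorem sectionEquiv_coe (n : N) : sectionEquiv ht n = (n * (factorSet ht (1, 1))⁻¹, 1) := by
  ext <;> simp

end Transversal

variable [IsMulCommutative N]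

def quotientConj : G ⧸ N →* MulAut N :=
  QuotientGroup.lift N MulAut.conjNormal fun n hn => MonoidHom.mem_ker.mpr <| by
    ext m
    simp [setLike_mul_comm hn m.2]

instance : MulDistribMulAction (G ⧸ N) N := MulDistribMulAction.compHom N quotientConj

theorem coe_mk_smul (g : G) (n : N) : (((g : G ⧸ N) • n : N) : G) = g * n * g⁻¹ :=
  MulAut.conjNormal_apply g n

section Transversal

variable {t : G ⧸ N → G} (ht : ∀ x, (t x : G ⧸ N) = x)

include ht

theorem coe_smul_eq_conj (x : G ⧸ N) (n : N) : ((x • n : N) : G) = t x * n * (t x)⁻¹ := by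
  conv_lhs => rw [← ht x]
  exact coe_mk_smul (t x) n

theorem isMulCocycle₂_factorSet : IsMulCocycle₂ (factorSet ht) := by
  intro x y z
  rw [mul_comm]
  ext
  simp only [coe_mul, coe_factorSet, coe_smul_eq_conj ht, mul_assoc]
  group

theorem sectionEquiv_mul_fst (g h : G) :
    (sectionEquiv ht (g * h)).1 =
      (sectionEquiv ht g).1 * ((g : G ⧸ N) • (sectionEquiv ht h).1) * factorSet ht (g, h) := by
  ext
  simp only [coe_mul, coe_sectionEquiv_fst, coe_factorSet, coe_smul_eq_conj ht,
    QuotientGroup.mk_mul]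
  group

theorem factorSet_mul_section (c : G ⧸ N → N) (x y : G ⧸ N) :
    factorSet (mk_mul_section ht c) (x, y) =
      factorSet ht (x, y) * (x • c y / c (x * y) * c x) := by
  have : factorSet (mk_mul_section ht c) (x, y) =
      c x * (x • c y) * factorSet ht (x, y) * (c (x * y))⁻¹ := by
    ext
    simp only [coe_mul, coe_inv, coe_factorSet, coe_smul_eq_conj ht]
    group
  rw [this, div_eq_mul_inv]
  ac_rfl

theorem exists_mulEquiv_of_factorSet {s : G ⧸ N → G} (hs : ∀ x, (s x : G ⧸ N) = x)
    (θ : N ≃* N) (ψ : G ⧸ N ≃* G ⧸ N) (hθψ : ∀ x n, θ (x • n) = ψ x • θ n)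
    (hst : ∀ x y, factorSet hs (ψ x, ψ y) = θ (factorSet ht (x, y))) :
    ∃ γ : G ≃* G, (∀ n : N, γ n = θ n) ∧ ∀ g, (γ g : G ⧸ N) = ψ g := by
  let γ : G ≃ G :=
    (sectionEquiv ht).trans ((θ.toEquiv.prodCongr ψ.toEquiv).trans (sectionEquiv hs).symm)
  have hγ : ∀ g, γ g = θ (sectionEquiv ht g).1 * s (ψ g) := fun _ => rfl
  have hγ_mul : ∀ g h, γ (g * h) = γ g * γ h := by
    intro g h
    simp only [hγ, sectionEquiv_mul_fst, QuotientGroup.mk_mul, map_mul, hθψ, ← hst, coe_mul,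
      coe_factorSet, coe_smul_eq_conj hs]
    group
  refine ⟨⟨γ, hγ_mul⟩, fun n => ?_, fun g => ?_⟩
  · have h11 := hst 1 1
    simp only [map_one] at h11
    show γ n = θ n
    rw [hγ, sectionEquiv_coe, mk_coe_eq_one, map_one, map_mul, map_inv, ← h11]
    simp
  · show (γ g : G ⧸ N) = ψ g
    simp [hγ, hs]

end Transversal

theorem exists_mulEquiv_of_compatible [Finite (G ⧸ N)]
    (hpow : Function.Bijective fun n : N => n ^ Nat.card (G ⧸ N))
    (θ : N ≃* N) (ψ : G ⧸ N ≃* G ⧸ N) (hθψ : ∀ x n, θ (x • n) = ψ x • θ n) :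
    ∃ γ : G ≃* G, (∀ n : N, γ n = θ n) ∧ ∀ g, (γ g : G ⧸ N) = ψ g := by
  have ht : ∀ x : G ⧸ N, (x.out : G ⧸ N) = x := QuotientGroup.out_eq'
  obtain ⟨c, hc⟩ := (((isMulCocycle₂_factorSet ht).map_mulEquiv θ ψ hθψ).div
    (isMulCocycle₂_factorSet ht)).isMulCoboundary₂_of_bijective_pow hpow
  refine exists_mulEquiv_of_factorSet ht (mk_mul_section ht c) θ ψ hθψ fun x y => ?_
  rw [factorSet_mul_section ht c, hc, Pi.div_apply, mul_div_cancel]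
  simp

end Subgroup

open Subgroup

theorem stmt_13_general {G : Type*} [Group G] [Finite G] (N : Subgroup G) [N.Normal]
    (hcomm : ∀ a b : N, a * b = b * a)
    (t : G ⧸ N → G) (ht : ∀ x : G ⧸ N, (QuotientGroup.mk (t x) : G ⧸ N) = x)
    (hbij : Function.Bijective (fun n : N => n ^ Nat.card (G ⧸ N))) :
    (∀ θ : N ≃* N,
      (∀ (n m : N) (x : G ⧸ N),
        (n : G) = (t x)⁻¹ * (m : G) * t x →
          (θ n : G) = (t x)⁻¹ * (θ m : G) * t x) →
      ∃ γ : G ≃* G,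
        (∀ n : N, γ n = (θ n : G)) ∧
        (∀ g : G, (QuotientGroup.mk (γ g) : G ⧸ N) = QuotientGroup.mk g)) ∧
    (∀ φ : G ⧸ N ≃* G ⧸ N,
      (∀ (n : N) (x : G ⧸ N),
        (t (φ x))⁻¹ * (n : G) * t (φ x) = (t x)⁻¹ * (n : G) * t x) →
      ∃ γ : G ≃* G,
        (∀ n ∈ N, γ n = n) ∧
        (∀ g : G, (QuotientGroup.mk (γ g) : G ⧸ N) = φ (QuotientGroup.mk g))) := by
  have : IsMulCommutative N := isMulCommutative_iff.mpr hcomm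
  refine ⟨fun θ hθ => ?_, fun φ hφ => ?_⟩
  · refine exists_mulEquiv_of_compatible hbij θ (MulEquiv.refl _) fun x n => ?_
    have hconj := hθ n (x • n) x (by rw [coe_smul_eq_conj ht]; group)
    ext
    rw [MulEquiv.refl_apply, coe_smul_eq_conj ht, hconj]
    group
  · obtain ⟨γ, hγN, hγQ⟩ := exists_mulEquiv_of_compatible hbij (MulEquiv.refl _) φ fun x n => by
      have hconj : (t (φ x))⁻¹ * (x • n : N) * t (φ x) = n := by
        rw [hφ, coe_smul_eq_conj ht]; group
      ext
      rw [MulEquiv.refl_apply, MulEquiv.refl_apply, coe_smul_eq_conj ht (φ x)]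
      conv_rhs => rw [← hconj]
      group
    exact ⟨γ, fun n hn => hγN ⟨n, hn⟩, hγQ⟩

/-- If G is finite, N abelian normal in G, and n ↦ n^{|G/N|} is an
automorphism of N (e.g. gcd(|N|,|G/N|) = 1), then every θ ∈ C₁ extends to an
automorphism of G centralizing G/N and every φ ∈ C₂ lifts to an automorphism of G
centralizing N. -/
theorem stmt_13 {G : Type*} [Group G] [Finite G] (N : Subgroup G) [N.Normal]
    (hcomm : ∀ a b : N, a * b = b * a)
    (t : G ⧸ N → G) (ht : ∀ x : G ⧸ N, (QuotientGroup.mk (t x) : G ⧸ N) = x)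
    (ht1 : t 1 = 1)
    (hbij : Function.Bijective (fun n : N => n ^ Nat.card (G ⧸ N))) :
    (∀ θ : N ≃* N,
      (∀ (n m : N) (x : G ⧸ N),
        (n : G) = (t x)⁻¹ * (m : G) * t x →
          (θ n : G) = (t x)⁻¹ * (θ m : G) * t x) →
      ∃ γ : G ≃* G,
        (∀ n : N, γ n = (θ n : G)) ∧
        (∀ g : G, (QuotientGroup.mk (γ g) : G ⧸ N) = QuotientGroup.mk g)) ∧
    (∀ φ : G ⧸ N ≃* G ⧸ N,
      (∀ (n : N) (x : G ⧸ N),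
        (t (φ x))⁻¹ * (n : G) * t (φ x) = (t x)⁻¹ * (n : G) * t x) →
      ∃ γ : G ≃* G,
        (∀ n ∈ N, γ n = n) ∧
        (∀ g : G, (QuotientGroup.mk (γ g) : G ⧸ N) = φ (QuotientGroup.mk g))) :=
  stmt_13_general N hcomm t ht hbij
end

section
/- Let N be an abelian normal subgroup of a finite group G and φ ∈ Aut(G/N). If for each prime p dividing |G/N| there is a Sylow p-subgroup P/N of G/N invariant under φ such that φ|_{P/N} lifts to an automorphism of P fixing N elementwise, then φ lifts to an automorphism of G fixing N elementwise. -/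
section Cocycle

variable {Q : Type*} [Group Q] {A : Type*} [AddCommGroup A]

/-- `c` is a coboundary for the (right) action `act`. -/
def IsCob (act : Q → A →+ A) (c : Q → Q → A) : Prop :=
  ∃ b : Q → A, ∀ x y, c x y = b (x * y) - act y (b x) - b y

/-- The set of integers `k` such that `k • c` is a coboundary. -/
def cobPows (act : Q → A →+ A) (c : Q → Q → A) : AddSubgroup ℤ where
  carrier := {k | IsCob act fun x y => k • c x y}
  zero_mem' := ⟨fun _ => 0, by simp⟩
  add_mem' := by
    rintro k l ⟨b1, h1⟩ ⟨b2, h2⟩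
    refine ⟨fun q => b1 q + b2 q, fun x y => ?_⟩
    show (k + l) • c x y = (b1 (x * y) + b2 (x * y)) - act y (b1 x + b2 x) - (b1 y + b2 y)
    rw [add_smul]
    simp only [h1, h2, map_add]
    abel
  neg_mem' := by
    rintro k ⟨b1, h1⟩
    refine ⟨fun q => -b1 q, fun x y => ?_⟩
    show (-k) • c x y = (-b1 (x * y)) - act y (-b1 x) - (-b1 y)
    rw [neg_smul]
    simp only [h1, map_neg]
    abel

theorem card_mem_cobPows [Fintype Q] (act : Q → A →+ A) (c : Q → Q → A)
    (hc : ∀ x y z, c (x * y) z + act z (c x y) = c x (y * z) + c y z) :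
    (Fintype.card Q : ℤ) ∈ cobPows act c := by
  rw [← neg_neg (Fintype.card Q : ℤ)]
  refine AddSubgroup.neg_mem _ ⟨fun h => ∑ x, c x h, fun y z => ?_⟩
  have key : (∑ x, c x z) + act z (∑ x, c x y)
      = (∑ x, c x (y * z)) + Fintype.card Q • c y z := by
    have h2 : (∑ x, (c (x * y) z + act z (c x y))) = ∑ x, (c x (y * z) + c y z) :=
      Finset.sum_congr rfl fun x _ => hc x y z
    rw [Finset.sum_add_distrib, Finset.sum_add_distrib, Finset.sum_const,
      Finset.card_univ] at h2
    rw [← h2, ← map_sum]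
    congr 1
    have := (Fintype.sum_equiv (Equiv.mulRight y) (fun x => c ((Equiv.mulRight y) x) z)
      (fun x => c x z) (fun x => rfl)).symm
    simpa using this
  show (-(Fintype.card Q : ℤ)) • c y z
      = (∑ x, c x (y * z)) - act z (∑ x, c x y) - (∑ x, c x z)
  have h4 : (Fintype.card Q) • c y z
      = (∑ x, c x z) + act z (∑ x, c x y) - (∑ x, c x (y * z)) := by
    rw [key]; abel
  rw [neg_zsmul, natCast_zsmul, h4]
  abel

theorem index_mem_cobPows [Fintype Q] (act : Q → A →+ A)
    (hact_mul : ∀ q1 q2 a, act q2 (act q1 a) = act (q1 * q2) a)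
    (c : Q → Q → A)
    (hc : ∀ x y z, c (x * y) z + act z (c x y) = c x (y * z) + c y z)
    (P : Subgroup Q) (aP : Q → A)
    (ha : ∀ x, x ∈ P → ∀ y, y ∈ P → c x y = aP (x * y) - act y (aP x) - aP y) :
    (P.index : ℤ) ∈ cobPows act c := by
  classical
  letI : Fintype (Q ⧸ P) := Fintype.ofFinite _
  set S := QuotientGroup.rightRel P with hS
  letI : Fintype (Quotient S) := Fintype.ofFinite _
  let ρ : Q → Q := fun q => (Quotient.mk S q).out
  have hmkρ : ∀ q, Quotient.mk S (ρ q) = Quotient.mk S q := fun q => Quotient.out_eq _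
  have hrel : ∀ z w : Q, Quotient.mk S z = Quotient.mk S w → z * w⁻¹ ∈ P := by
    intro z w h
    have h2 := Quotient.exact h.symm
    exact QuotientGroup.rightRel_apply.mp h2
  have hκ : ∀ q : Q, q * (ρ q)⁻¹ ∈ P := by
    intro q
    have h2 := Quotient.exact (hmkρ q)
    exact QuotientGroup.rightRel_apply.mp h2
  have hρP : ∀ p, p ∈ P → ∀ q, ρ (p * q) = ρ q := by
    intro p hp q
    show (Quotient.mk S (p * q)).out = (Quotient.mk S q).out
    congr 1
    apply Quotient.sound
    have h3 : q * (p * q)⁻¹ = p⁻¹ := by group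
    show Setoid.r (p * q) q
    rw [QuotientGroup.rightRel_apply (s := P), h3]
    exact P.inv_mem hp
  have hmk_mul : ∀ z w v : Q, Quotient.mk S z = Quotient.mk S w →
      Quotient.mk S (z * v) = Quotient.mk S (w * v) := by
    intro z w v h
    apply Quotient.sound
    have h2 := hrel z w h
    show Setoid.r (z * v) (w * v)
    rw [QuotientGroup.rightRel_apply (s := P)]
    have h3 : (w * v) * (z * v)⁻¹ = (z * w⁻¹)⁻¹ := by group
    rw [h3]
    exact P.inv_mem h2
  let d : Q → Q → A := fun r q =>
    c r q - c (r * q * (ρ (r * q))⁻¹) (ρ (r * q)) - act (ρ (r * q)) (aP (r * q * (ρ (r * q))⁻¹))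
  have hd : ∀ r x y, d r (x * y) + c x y = d (ρ (r * x)) y + act y (d r x) := by
    intro r x y
    have e0 : r * (x * y) = (r * x * (ρ (r * x))⁻¹) * (ρ (r * x) * y) := by group
    have hρ1 : ρ (r * (x * y)) = ρ (ρ (r * x) * y) := by
      rw [e0]; exact hρP _ (hκ (r * x)) _
    have hκmul : r * (x * y) * (ρ (ρ (r * x) * y))⁻¹
        = (r * x * (ρ (r * x))⁻¹) * (ρ (r * x) * y * (ρ (ρ (r * x) * y))⁻¹) := by group
    have E_a : aP ((r * x * (ρ (r * x))⁻¹) * (ρ (r * x) * y * (ρ (ρ (r * x) * y))⁻¹))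
        = c (r * x * (ρ (r * x))⁻¹) (ρ (r * x) * y * (ρ (ρ (r * x) * y))⁻¹)
          + act (ρ (r * x) * y * (ρ (ρ (r * x) * y))⁻¹) (aP (r * x * (ρ (r * x))⁻¹))
          + aP (ρ (r * x) * y * (ρ (ρ (r * x) * y))⁻¹) := by
      rw [ha _ (hκ (r * x)) _ (hκ (ρ (r * x) * y))]; abel
    have hcomp1 : act (ρ (ρ (r * x) * y))
          (act (ρ (r * x) * y * (ρ (ρ (r * x) * y))⁻¹) (aP (r * x * (ρ (r * x))⁻¹)))
        = act y (act (ρ (r * x)) (aP (r * x * (ρ (r * x))⁻¹))) := by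
      rw [hact_mul, hact_mul]
      congr 2
      group
    have E1 : c r (x * y) = c (r * x) y + act y (c r x) - c x y :=
      eq_sub_iff_add_eq.mpr (hc r x y).symm
    have h2 := hc (r * x * (ρ (r * x))⁻¹) (ρ (r * x)) y
    rw [show (r * x * (ρ (r * x))⁻¹) * (ρ (r * x)) = r * x by group] at h2
    have E2 : c (r * x * (ρ (r * x))⁻¹) (ρ (r * x) * y)
        = c (r * x) y + act y (c (r * x * (ρ (r * x))⁻¹) (ρ (r * x))) - c (ρ (r * x)) y :=
      eq_sub_iff_add_eq.mpr h2.symm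
    have h3 := hc (r * x * (ρ (r * x))⁻¹) (ρ (r * x) * y * (ρ (ρ (r * x) * y))⁻¹)
      (ρ (ρ (r * x) * y))
    rw [show (ρ (r * x) * y * (ρ (ρ (r * x) * y))⁻¹) * (ρ (ρ (r * x) * y)) = ρ (r * x) * y
      by group] at h3
    have E3 : c ((r * x * (ρ (r * x))⁻¹) * (ρ (r * x) * y * (ρ (ρ (r * x) * y))⁻¹))
          (ρ (ρ (r * x) * y))
        = c (r * x * (ρ (r * x))⁻¹) (ρ (r * x) * y)
          + c (ρ (r * x) * y * (ρ (ρ (r * x) * y))⁻¹) (ρ (ρ (r * x) * y))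
          - act (ρ (ρ (r * x) * y)) (c (r * x * (ρ (r * x))⁻¹)
              (ρ (r * x) * y * (ρ (ρ (r * x) * y))⁻¹)) :=
      eq_sub_iff_add_eq.mpr h3
    show c r (x * y) - c (r * (x * y) * (ρ (r * (x * y)))⁻¹) (ρ (r * (x * y)))
          - act (ρ (r * (x * y))) (aP (r * (x * y) * (ρ (r * (x * y)))⁻¹)) + c x y
        = (c (ρ (r * x)) y - c (ρ (r * x) * y * (ρ (ρ (r * x) * y))⁻¹) (ρ (ρ (r * x) * y))
            - act (ρ (ρ (r * x) * y)) (aP (ρ (r * x) * y * (ρ (ρ (r * x) * y))⁻¹)))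
          + act y (c r x - c (r * x * (ρ (r * x))⁻¹) (ρ (r * x))
            - act (ρ (r * x)) (aP (r * x * (ρ (r * x))⁻¹)))
    rw [hρ1, hκmul, E_a]
    simp only [map_add, map_sub]
    rw [hcomp1, E1, E3, E2]
    abel
  have key : ∀ x y, (∑ t : Quotient S, d t.out (x * y))
        + (Fintype.card (Quotient S)) • c x y
      = (∑ t : Quotient S, d t.out y) + act y (∑ t : Quotient S, d t.out x) := by
    intro x y
    have hsum : (∑ t : Quotient S, (d t.out (x * y) + c x y))
        = ∑ t : Quotient S, (d (ρ (t.out * x)) y + act y (d t.out x)) :=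
      Finset.sum_congr rfl fun t _ => hd t.out x y
    rw [Finset.sum_add_distrib, Finset.sum_add_distrib, Finset.sum_const, Finset.card_univ,
      ← map_sum] at hsum
    have hbij : Function.Bijective (fun t : Quotient S => Quotient.mk S (t.out * x)) := by
      constructor
      · intro t1 t2 h
        have h4 := hmk_mul _ _ x⁻¹ h
        simp only [mul_inv_cancel_right] at h4
        rw [← Quotient.out_eq t1, ← Quotient.out_eq t2]
        exact h4
      · intro t
        refine ⟨Quotient.mk S (t.out * x⁻¹), ?_⟩
        have h4 := hmk_mul _ _ x (Quotient.out_eq (Quotient.mk S (t.out * x⁻¹)))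
        simp only [inv_mul_cancel_right] at h4
        show Quotient.mk S ((Quotient.mk S (t.out * x⁻¹)).out * x) = t
        rw [h4, Quotient.out_eq]
    have hreindex : (∑ t : Quotient S, d (ρ (t.out * x)) y) = ∑ t : Quotient S, d t.out y :=
      Fintype.sum_bijective _ hbij _ _ (fun t => rfl)
    rw [hreindex] at hsum
    rw [hsum]
  have hindex : P.index = Fintype.card (Quotient S) := by
    rw [Subgroup.index,
      Nat.card_congr (QuotientGroup.quotientRightRelEquivQuotientLeftRel P).symm,
      Nat.card_eq_fintype_card]
  rw [hindex, ← neg_neg (Fintype.card (Quotient S) : ℤ)]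
  refine AddSubgroup.neg_mem _ ⟨fun q => ∑ t : Quotient S, d t.out q, fun x y => ?_⟩
  show (-(Fintype.card (Quotient S) : ℤ)) • c x y
      = (∑ t : Quotient S, d t.out (x * y)) - act y (∑ t : Quotient S, d t.out x)
        - (∑ t : Quotient S, d t.out y)
  have h6 : (Fintype.card (Quotient S)) • c x y
      = ((∑ t : Quotient S, d t.out y) + act y (∑ t : Quotient S, d t.out x))
        - (∑ t : Quotient S, d t.out (x * y)) := by
    rw [eq_sub_iff_add_eq, add_comm]
    exact key x y
  rw [neg_zsmul, natCast_zsmul, h6]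
  abel

end Cocycle

theorem one_mem_of_primes (I : AddSubgroup ℤ) {n : ℕ} (hn : 0 < n) (hnI : (n : ℤ) ∈ I)
    (h : ∀ p : ℕ, p.Prime → p ∣ n → ∃ m : ℤ, m ∈ I ∧ ¬ (p : ℤ) ∣ m) : (1 : ℤ) ∈ I := by
  obtain ⟨a, ha⟩ := Int.subgroup_cyclic I
  have hdvd : ∀ x : ℤ, x ∈ I → a ∣ x := by
    intro x hx
    rw [ha, AddSubgroup.mem_closure_singleton] at hx
    obtain ⟨k, hk⟩ := hx
    exact ⟨k, by rw [← hk, smul_eq_mul]; ring⟩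
  by_cases h1 : a.natAbs = 1
  · rw [ha, AddSubgroup.mem_closure_singleton]
    rcases Int.natAbs_eq_iff.mp h1 with h2 | h2
    · exact ⟨1, by simp [h2]⟩
    · exact ⟨-1, by simp [h2]⟩
  · exfalso
    have ha_ne : a ≠ 0 := by
      intro h0
      have h2 := hdvd _ hnI
      rw [h0] at h2
      have := zero_dvd_iff.mp h2
      omega
    have hpp : (a.natAbs.minFac).Prime := Nat.minFac_prime h1
    have hpa : ((a.natAbs.minFac : ℤ)) ∣ a := by
      have h2 : ((a.natAbs.minFac : ℤ)) ∣ (a.natAbs : ℤ) :=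
        Int.natCast_dvd_natCast.mpr (Nat.minFac_dvd _)
      exact Int.dvd_natAbs.mp h2
    have hpn : a.natAbs.minFac ∣ n := by
      have h2 : ((a.natAbs.minFac : ℤ)) ∣ (n : ℤ) := hpa.trans (hdvd _ hnI)
      exact Int.ofNat_dvd.mp h2
    obtain ⟨m, hmI, hpm⟩ := h _ hpp hpn
    exact hpm (hpa.trans (hdvd _ hmI))

theorem subgroup_eq_top_of_sylows {Q : Type*} [Group Q] [Finite Q] (H : Subgroup Q)
    (h : ∀ p : ℕ, p.Prime → p ∣ Nat.card Q → ∃ P : Sylow p Q, (P : Subgroup Q) ≤ H) :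
    H = ⊤ := by
  have hQ0 : Nat.card Q ≠ 0 := Nat.card_pos.ne'
  have hH0 : Nat.card H ≠ 0 := Nat.card_pos.ne'
  have hdvd : Nat.card Q ∣ Nat.card H := by
    rw [← Nat.factorization_le_iff_dvd hQ0 hH0]
    intro p
    by_cases hp : p.Prime
    · by_cases hpQ : p ∣ Nat.card Q
      · obtain ⟨P, hP⟩ := h p hp hpQ
        haveI : Fact p.Prime := ⟨hp⟩
        have hcard : Nat.card (P : Subgroup Q) = p ^ (Nat.card Q).factorization p :=
          P.card_eq_multiplicity
        have h2 : p ^ (Nat.card Q).factorization p ∣ Nat.card H := by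
          rw [← hcard]
          exact Subgroup.card_dvd_of_le hP
        exact (Nat.Prime.pow_dvd_iff_le_factorization hp hH0).mp h2
      · have : (Nat.card Q).factorization p = 0 := by
          rw [Nat.factorization_eq_zero_iff]
          tauto
        simp [this]
    · simp [Nat.factorization_eq_zero_of_not_prime _ hp]
  exact Subgroup.eq_top_of_card_eq H
    (Nat.dvd_antisymm (Subgroup.card_subgroup_dvd_card H) hdvd)

open QuotientGroup Additive

/-- Let N be an abelian normal subgroup of a finite group G and
φ ∈ Aut(G/N). If for each prime p dividing |G/N| there is a φ-invariant Sylow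
p-subgroup P/N of G/N such that φ|_{P/N} lifts to an automorphism of the preimage
P fixing N elementwise, then φ lifts to an automorphism of G fixing N
elementwise. -/
theorem stmt_14 {G : Type*} [Group G] [Finite G] (N : Subgroup G) [N.Normal]
    (hcomm : ∀ a b : N, a * b = b * a)
    (φ : G ⧸ N ≃* G ⧸ N)
    (hSyl : ∀ p : ℕ, p.Prime → p ∣ Nat.card (G ⧸ N) →
      ∃ Q : Sylow p (G ⧸ N),
        (∀ x ∈ (Q : Subgroup (G ⧸ N)), φ x ∈ (Q : Subgroup (G ⧸ N))) ∧
        ∃ γP : ((Q : Subgroup (G ⧸ N)).comap (QuotientGroup.mk' N)) ≃*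
               ((Q : Subgroup (G ⧸ N)).comap (QuotientGroup.mk' N)),
          (∀ g : ((Q : Subgroup (G ⧸ N)).comap (QuotientGroup.mk' N)),
            (g : G) ∈ N → ((γP g : G)) = (g : G)) ∧
          (∀ g : ((Q : Subgroup (G ⧸ N)).comap (QuotientGroup.mk' N)),
            (QuotientGroup.mk ((γP g : G)) : G ⧸ N) =
              φ (QuotientGroup.mk (g : G)))) :
    ∃ γ : G ≃* G,
      (∀ n ∈ N, γ n = n) ∧
      (∀ g : G, (QuotientGroup.mk (γ g) : G ⧸ N) = φ (QuotientGroup.mk g)) := by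
  classical
  letI : CommGroup ↥N := { (inferInstance : Group ↥N) with mul_comm := hcomm }
  letI : Fintype (G ⧸ N) := Fintype.ofFinite _
  -- the section of the quotient map
  let σ : G ⧸ N → G := fun q => if q = 1 then 1 else q.out
  have hσ1 : σ 1 = 1 := if_pos rfl
  have hπσ : ∀ q : G ⧸ N, (QuotientGroup.mk (σ q) : G ⧸ N) = q := by
    intro q
    by_cases h : q = 1
    · subst h
      show (QuotientGroup.mk (σ 1) : G ⧸ N) = 1
      rw [hσ1, QuotientGroup.mk_one]
    · show (QuotientGroup.mk (if q = 1 then 1 else q.out) : G ⧸ N) = q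
      rw [if_neg h]
      exact QuotientGroup.out_eq' q
  have hNcomm : ∀ a b : G, a ∈ N → b ∈ N → a * b = b * a := by
    intro a b ha hb
    exact congrArg Subtype.val (hcomm ⟨a, ha⟩ ⟨b, hb⟩)
  have hconjmem : ∀ (g n : G), n ∈ N → g⁻¹ * n * g ∈ N := by
    intro g n hn
    have h := (inferInstance : N.Normal).conj_mem n hn g⁻¹
    simpa using h
  -- the action of G/N on N by conjugation through σ
  let act : G ⧸ N → ↥N →* ↥N := fun q =>
    { toFun := fun n => ⟨(σ q)⁻¹ * n * σ q, hconjmem _ _ n.2⟩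
      map_one' := by
        apply Subtype.ext
        show (σ q)⁻¹ * ((1 : ↥N) : G) * σ q = ((1 : ↥N) : G)
        simp
      map_mul' := by
        intro n m
        apply Subtype.ext
        show (σ q)⁻¹ * (↑n * ↑m) * σ q = ((σ q)⁻¹ * ↑n * σ q) * ((σ q)⁻¹ * ↑m * σ q)
        group }
  have hact_coe : ∀ (q : G ⧸ N) (n : ↥N), (act q n : G) = (σ q)⁻¹ * n * σ q :=
    fun _ _ => rfl
  -- independence of the conjugation action of the representative
  have hconj_rep : ∀ g g' : G, (QuotientGroup.mk g : G ⧸ N) = QuotientGroup.mk g' →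
      ∀ n : G, n ∈ N → g⁻¹ * n * g = g'⁻¹ * n * g' := by
    intro g g' h n hn
    have hk : g⁻¹ * g' ∈ N := (QuotientGroup.eq (s := N)).mp h
    have hg' : g' = g * (g⁻¹ * g') := by group
    have hgng : g⁻¹ * n * g ∈ N := hconjmem g n hn
    rw [hg']
    have h2 : (g * (g⁻¹ * g'))⁻¹ * n * (g * (g⁻¹ * g'))
        = (g⁻¹ * g')⁻¹ * (g⁻¹ * n * g) * (g⁻¹ * g') := by group
    rw [h2]
    have h5 : (g⁻¹ * g')⁻¹ * (g⁻¹ * n * g) = (g⁻¹ * n * g) * (g⁻¹ * g')⁻¹ :=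
      hNcomm _ _ (N.inv_mem hk) hgng
    rw [h5]
    group
  have hact_mul : ∀ (q1 q2 : G ⧸ N) (n : ↥N), act q2 (act q1 n) = act (q1 * q2) n := by
    intro q1 q2 n
    apply Subtype.ext
    show (σ q2)⁻¹ * ((σ q1)⁻¹ * ↑n * σ q1) * σ q2 = (σ (q1 * q2))⁻¹ * ↑n * σ (q1 * q2)
    have h1 : (σ q2)⁻¹ * ((σ q1)⁻¹ * ↑n * σ q1) * σ q2
        = (σ q1 * σ q2)⁻¹ * ↑n * (σ q1 * σ q2) := by group
    rw [h1]
    apply hconj_rep _ _ _ _ n.2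
    rw [QuotientGroup.mk_mul, hπσ, hπσ, hπσ]
  have hact_one : ∀ n : ↥N, act 1 n = n := by
    intro n
    apply Subtype.ext
    show (σ 1)⁻¹ * ↑n * σ 1 = ↑n
    rw [hσ1]; group
  -- compatibility of φ with the action, via the Sylow hypothesis
  let Ecomp : Subgroup (G ⧸ N) :=
    { carrier := {q | ∀ n : ↥N, act (φ q) n = act q n}
      one_mem' := by intro n; rw [map_one]
      mul_mem' := by
        intro q1 q2 h1 h2 n
        rw [map_mul, ← hact_mul (φ q1) (φ q2) n, h1, h2, hact_mul]
      inv_mem' := by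
        intro q h n
        rw [map_inv]
        have hinj : Function.Injective (act (φ q)) := by
          intro a b hab
          have h2 : act ((φ q)⁻¹) (act (φ q) a) = act ((φ q)⁻¹) (act (φ q) b) := by rw [hab]
          rwa [hact_mul, mul_inv_cancel, hact_one, hact_mul, mul_inv_cancel, hact_one] at h2
        apply hinj
        rw [hact_mul ((φ q)⁻¹) (φ q) n, inv_mul_cancel, hact_one, h,
          hact_mul q⁻¹ q n, inv_mul_cancel, hact_one] }
  have hEcomp : ∀ (q : G ⧸ N) (n : ↥N), act (φ q) n = act q n := by
    have htop : Ecomp = ⊤ := by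
      apply subgroup_eq_top_of_sylows
      intro p hp hpn
      obtain ⟨Qp, hinv, γP, hfix, hind⟩ := hSyl p hp hpn
      refine ⟨Qp, ?_⟩
      intro q hq
      intro n
      have hσmem : σ q ∈ (Qp : Subgroup (G ⧸ N)).comap (QuotientGroup.mk' N) := by
        show QuotientGroup.mk' N (σ q) ∈ (Qp : Subgroup (G ⧸ N))
        rw [QuotientGroup.mk'_apply]
        show (QuotientGroup.mk (σ q) : G ⧸ N) ∈ _
        rw [hπσ]
        exact hq
      have hNle : ∀ x : G, x ∈ N → x ∈ (Qp : Subgroup (G ⧸ N)).comap (QuotientGroup.mk' N) := by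
        intro x hx
        show QuotientGroup.mk' N x ∈ (Qp : Subgroup (G ⧸ N))
        rw [QuotientGroup.mk'_apply]
        have : (QuotientGroup.mk x : G ⧸ N) = 1 := (QuotientGroup.eq_one_iff x).mpr hx
        rw [this]
        exact one_mem _
      let PT := (Qp : Subgroup (G ⧸ N)).comap (QuotientGroup.mk' N)
      let g : ↥PT := ⟨σ q, hσmem⟩
      let ng : ↥PT := ⟨(n : G), hNle _ n.2⟩
      have hmem2 : ((g⁻¹ * ng * g : ↥PT) : G) ∈ N := by
        show (σ q)⁻¹ * ↑n * σ q ∈ N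
        exact hconjmem _ _ n.2
      have h3 : (γP (g⁻¹ * ng * g) : G) = (σ q)⁻¹ * ↑n * σ q := hfix _ hmem2
      have h4 : (γP (g⁻¹ * ng * g) : G) = (γP g : G)⁻¹ * ↑n * (γP g : G) := by
        rw [map_mul, map_mul, map_inv]
        show (γP g : G)⁻¹ * (γP ng : G) * (γP g : G) = _
        rw [hfix ng n.2]
      have h5 : (QuotientGroup.mk ((γP g : G)) : G ⧸ N) = QuotientGroup.mk (σ (φ q)) := by
        rw [hind g]
        show φ (QuotientGroup.mk (σ q)) = _
        rw [hπσ, hπσ]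
      have h6 : (γP g : G)⁻¹ * ↑n * (γP g : G) = (σ (φ q))⁻¹ * ↑n * σ (φ q) :=
        hconj_rep _ _ h5 _ n.2
      apply Subtype.ext
      show (σ (φ q))⁻¹ * ↑n * σ (φ q) = (σ q)⁻¹ * ↑n * σ q
      rw [← h6, ← h4, h3]
    intro q n
    have hq : q ∈ Ecomp := by rw [htop]; trivial
    exact hq n
  -- the 2-cocycle
  have hfmem : ∀ q1 q2 : G ⧸ N, (σ (q1 * q2))⁻¹ * (σ q1 * σ q2) ∈ N := by
    intro q1 q2
    apply (QuotientGroup.eq_one_iff _).mp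
    rw [QuotientGroup.mk_mul, QuotientGroup.mk_inv, QuotientGroup.mk_mul, hπσ, hπσ, hπσ]
    group
  let f : G ⧸ N → G ⧸ N → ↥N := fun q1 q2 => ⟨(σ (q1 * q2))⁻¹ * (σ q1 * σ q2), hfmem q1 q2⟩
  have hf_coe : ∀ q1 q2, σ q1 * σ q2 = σ (q1 * q2) * (f q1 q2 : G) := by
    intro q1 q2
    show σ q1 * σ q2 = σ (q1 * q2) * ((σ (q1 * q2))⁻¹ * (σ q1 * σ q2))
    group
  have hfcoc : ∀ x y z, f (x * y) z * act z (f x y) = f x (y * z) * f y z := by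
    intro x y z
    apply Subtype.ext
    show ((σ (x * y * z))⁻¹ * (σ (x * y) * σ z))
          * ((σ z)⁻¹ * ((σ (x * y))⁻¹ * (σ x * σ y)) * σ z)
        = ((σ (x * (y * z)))⁻¹ * (σ x * σ (y * z))) * ((σ (y * z))⁻¹ * (σ y * σ z))
    rw [show x * (y * z) = x * y * z from (mul_assoc x y z).symm]
    group
  -- pass to additive notation
  let A := Additive ↥N
  let actA : G ⧸ N → A →+ A := fun q => MonoidHom.toAdditive (act q)
  have hactA_mul : ∀ (q1 q2 : G ⧸ N) (a : A), actA q2 (actA q1 a) = actA (q1 * q2) a := by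
    intro q1 q2 a
    exact congrArg Additive.ofMul (hact_mul q1 q2 a.toMul)
  let fA : G ⧸ N → G ⧸ N → A := fun q1 q2 => Additive.ofMul (f q1 q2)
  let cA : G ⧸ N → G ⧸ N → A := fun q1 q2 => fA (φ q1) (φ q2) - fA q1 q2
  have hfAcoc : ∀ x y z, fA (x * y) z + actA z (fA x y) = fA x (y * z) + fA y z := by
    intro x y z
    exact congrArg Additive.ofMul (hfcoc x y z)
  have hcAcoc : ∀ x y z, cA (x * y) z + actA z (cA x y) = cA x (y * z) + cA y z := by
    intro x y z
    have h1 := hfAcoc x y z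
    have h2 := hfAcoc (φ x) (φ y) (φ z)
    rw [← map_mul φ x y, ← map_mul φ y z] at h2
    have h2' : fA (φ (x * y)) (φ z) + actA z (fA (φ x) (φ y))
        = fA (φ x) (φ (y * z)) + fA (φ y) (φ z) := by
      rw [← h2]
      congr 1
      exact (congrArg Additive.ofMul (hEcomp z (f (φ x) (φ y)))).symm
    show (fA (φ (x * y)) (φ z) - fA (x * y) z) + actA z (fA (φ x) (φ y) - fA x y)
        = (fA (φ x) (φ (y * z)) - fA x (y * z)) + (fA (φ y) (φ z) - fA y z)
    have E1 : fA (x * y) z = fA x (y * z) + fA y z - actA z (fA x y) :=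
      eq_sub_iff_add_eq.mpr h1
    have E2 : fA (φ (x * y)) (φ z) = fA (φ x) (φ (y * z)) + fA (φ y) (φ z)
        - actA z (fA (φ x) (φ y)) := eq_sub_iff_add_eq.mpr h2'
    rw [E1, E2, map_sub]
    abel
  -- membership in cobPows : the full group order
  let I := cobPows actA cA
  have hcard : ((Fintype.card (G ⧸ N) : ℤ)) ∈ I := card_mem_cobPows actA cA hcAcoc
  -- membership : the Sylow indices
  have hsylI : ∀ p : ℕ, p.Prime → p ∣ Nat.card (G ⧸ N) →
      ∃ m : ℤ, m ∈ I ∧ ¬ (p : ℤ) ∣ m := by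
    intro p hp hpn
    obtain ⟨Qp, hinv, γP, hfix, hind⟩ := hSyl p hp hpn
    have hσmem : ∀ q : G ⧸ N, q ∈ (Qp : Subgroup (G ⧸ N)) →
        σ q ∈ (Qp : Subgroup (G ⧸ N)).comap (QuotientGroup.mk' N) := by
      intro q hq
      show QuotientGroup.mk' N (σ q) ∈ (Qp : Subgroup (G ⧸ N))
      rw [QuotientGroup.mk'_apply]
      show (QuotientGroup.mk (σ q) : G ⧸ N) ∈ _
      rw [hπσ]
      exact hq
    have hNle : ∀ x : G, x ∈ N → x ∈ (Qp : Subgroup (G ⧸ N)).comap (QuotientGroup.mk' N) := by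
      intro x hx
      show QuotientGroup.mk' N x ∈ (Qp : Subgroup (G ⧸ N))
      rw [QuotientGroup.mk'_apply]
      have : (QuotientGroup.mk x : G ⧸ N) = 1 := (QuotientGroup.eq_one_iff x).mpr hx
      rw [this]
      exact one_mem _
    have haPmem : ∀ q (h : q ∈ (Qp : Subgroup (G ⧸ N))),
        (σ (φ q))⁻¹ * (γP ⟨σ q, hσmem q h⟩ : G) ∈ N := by
      intro q h
      apply (QuotientGroup.eq_one_iff _).mp
      rw [QuotientGroup.mk_mul, QuotientGroup.mk_inv, hπσ, hind ⟨σ q, hσmem q h⟩]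
      show (φ q)⁻¹ * φ (QuotientGroup.mk (σ q)) = 1
      rw [hπσ]
      group
    let aPm : G ⧸ N → ↥N := fun q =>
      if h : q ∈ (Qp : Subgroup (G ⧸ N)) then
        ⟨(σ (φ q))⁻¹ * (γP ⟨σ q, hσmem q h⟩ : G), haPmem q h⟩ else 1
    have haPm : ∀ q (h : q ∈ (Qp : Subgroup (G ⧸ N))),
        (γP ⟨σ q, hσmem q h⟩ : G) = σ (φ q) * (aPm q : G) := by
      intro q h
      have h7 : aPm q = ⟨(σ (φ q))⁻¹ * (γP ⟨σ q, hσmem q h⟩ : G), haPmem q h⟩ := dif_pos h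
      rw [h7]
      show (γP ⟨σ q, hσmem q h⟩ : G) = σ (φ q) * ((σ (φ q))⁻¹ * (γP ⟨σ q, hσmem q h⟩ : G))
      group
    -- the multiplicative coboundary equation on the Sylow subgroup
    have hEQ : ∀ x (hx : x ∈ (Qp : Subgroup (G ⧸ N))) y (hy : y ∈ (Qp : Subgroup (G ⧸ N))),
        aPm (x * y) * f x y = f (φ x) (φ y) * act y (aPm x) * aPm y := by
      intro x hx y hy
      have hxy := mul_mem hx hy
      have hfm : (f x y : G) ∈ N := (f x y).2
      have h2 : (⟨σ x, hσmem x hx⟩ * ⟨σ y, hσmem y hy⟩ :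
            ↥((Qp : Subgroup (G ⧸ N)).comap (QuotientGroup.mk' N)))
          = ⟨σ (x * y), hσmem _ hxy⟩ * ⟨(f x y : G), hNle _ hfm⟩ := by
        apply Subtype.ext
        show σ x * σ y = σ (x * y) * (f x y : G)
        exact hf_coe x y
      have hD : σ (φ (x * y)) * ((aPm (x * y) : G) * (f x y : G))
          = σ (φ x) * (aPm x : G) * (σ (φ y) * (aPm y : G)) := by
        calc σ (φ (x * y)) * ((aPm (x * y) : G) * (f x y : G))
            = (γP ⟨σ (x * y), hσmem _ hxy⟩ : G) * (f x y : G) := by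
              rw [haPm _ hxy]; group
          _ = (γP (⟨σ (x * y), hσmem _ hxy⟩ * ⟨(f x y : G), hNle _ hfm⟩) : G) := by
              rw [map_mul]
              show _ = (γP ⟨σ (x * y), hσmem _ hxy⟩ : G) * (γP ⟨(f x y : G), hNle _ hfm⟩ : G)
              rw [hfix ⟨(f x y : G), hNle _ hfm⟩ hfm]
          _ = (γP (⟨σ x, hσmem x hx⟩ * ⟨σ y, hσmem y hy⟩) : G) := by rw [← h2]
          _ = (γP ⟨σ x, hσmem x hx⟩ : G) * (γP ⟨σ y, hσmem y hy⟩ : G) := by rw [map_mul]; rfl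
          _ = σ (φ x) * (aPm x : G) * (σ (φ y) * (aPm y : G)) := by
              rw [haPm x hx, haPm y hy]
      rw [← hEcomp y (aPm x)]
      apply Subtype.ext
      show (aPm (x * y) : G) * (f x y : G)
          = ((σ (φ x * φ y))⁻¹ * (σ (φ x) * σ (φ y)))
            * ((σ (φ y))⁻¹ * (aPm x : G) * σ (φ y)) * (aPm y : G)
      apply mul_left_cancel (a := σ (φ (x * y)))
      rw [show σ (φ (x * y)) * ((aPm (x * y) : G) * (f x y : G))
          = σ (φ x) * (aPm x : G) * (σ (φ y) * (aPm y : G)) from hD]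
      rw [map_mul φ x y]
      group
    -- the additive coboundary equation
    let aPA : G ⧸ N → A := fun q => Additive.ofMul (aPm q)
    have haPA : ∀ x, x ∈ (Qp : Subgroup (G ⧸ N)) → ∀ y, y ∈ (Qp : Subgroup (G ⧸ N)) →
        cA x y = aPA (x * y) - actA y (aPA x) - aPA y := by
      intro x hx y hy
      have h := congrArg Additive.ofMul (hEQ x hx y hy)
      have h' : aPA (x * y) + fA x y = fA (φ x) (φ y) + actA y (aPA x) + aPA y := h
      have E : fA (φ x) (φ y) = aPA (x * y) + fA x y - (actA y (aPA x) + aPA y) := by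
        rw [eq_sub_iff_add_eq, h']
        abel
      show fA (φ x) (φ y) - fA x y = aPA (x * y) - actA y (aPA x) - aPA y
      rw [E]
      abel
    refine ⟨((Qp : Subgroup (G ⧸ N)).index : ℤ), ?_, ?_⟩
    · exact index_mem_cobPows actA hactA_mul cA hcAcoc (Qp : Subgroup (G ⧸ N)) aPA haPA
    · intro hdvd
      have h2 : p ∣ (Qp : Subgroup (G ⧸ N)).index := Int.ofNat_dvd.mp hdvd
      haveI : Fact p.Prime := ⟨hp⟩
      exact Qp.not_dvd_index h2
  -- conclude : cA is a coboundary
  have hone : (1 : ℤ) ∈ I := by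
    apply one_mem_of_primes I (n := Nat.card (G ⧸ N)) Nat.card_pos
    · rw [Nat.card_eq_fintype_card]
      exact hcard
    · exact hsylI
  obtain ⟨bA, hbA⟩ := hone
  have hbA' : ∀ x y, cA x y = bA (x * y) - actA y (bA x) - bA y := by
    intro x y
    have h2 : (1 : ℤ) • cA x y = bA (x * y) - actA y (bA x) - bA y := hbA x y
    rwa [one_smul] at h2
  -- back to multiplicative notation
  let b : G ⧸ N → ↥N := fun q => Additive.toMul (bA q)
  have hb : ∀ x y, f (φ x) (φ y) * (f x y)⁻¹
      = b (x * y) * (act y (b x))⁻¹ * (b y)⁻¹ := by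
    intro x y
    have h := congrArg Additive.toMul (hbA' x y)
    rw [toMul_sub, toMul_sub] at h
    have h2 : f (φ x) (φ y) / f x y = b (x * y) / (act y (b x)) / b y := h
    rw [div_eq_mul_inv, div_eq_mul_inv, div_eq_mul_inv] at h2
    exact h2
  have hb1 : b 1 = 1 := by
    have h := hb 1 1
    rw [mul_one, map_one φ, hact_one] at h
    have h2 : (b 1)⁻¹ = (1 : ↥N) := by
      have h3 := h.symm
      simpa using h3
    exact inv_eq_one.mp h2
  -- construct the lift
  have hmemn : ∀ g : G, (σ (QuotientGroup.mk g))⁻¹ * g ∈ N := by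
    intro g
    apply (QuotientGroup.eq_one_iff _).mp
    rw [QuotientGroup.mk_mul, QuotientGroup.mk_inv, hπσ]
    group
  let nOf : G → ↥N := fun g => ⟨(σ (QuotientGroup.mk g))⁻¹ * g, hmemn g⟩
  let γ0 : G → G := fun g =>
    σ (φ (QuotientGroup.mk g)) * ((b (QuotientGroup.mk g) * nOf g : ↥N) : G)
  have hswap : ∀ (q : G ⧸ N) (n : ↥N), (n : G) * σ q = σ q * (act q n : G) := by
    intro q n
    rw [hact_coe]
    group
  have hγmul : ∀ g1 g2 : G, γ0 (g1 * g2) = γ0 g1 * γ0 g2 := by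
    intro g1 g2
    have hq12 : (QuotientGroup.mk (g1 * g2) : G ⧸ N)
        = QuotientGroup.mk g1 * QuotientGroup.mk g2 := rfl
    have hn12 : nOf (g1 * g2)
        = f (QuotientGroup.mk g1) (QuotientGroup.mk g2)
          * act (QuotientGroup.mk g2) (nOf g1) * nOf g2 := by
      apply Subtype.ext
      show (σ (QuotientGroup.mk (g1 * g2)))⁻¹ * (g1 * g2)
          = ((σ (QuotientGroup.mk g1 * QuotientGroup.mk g2))⁻¹
              * (σ (QuotientGroup.mk g1) * σ (QuotientGroup.mk g2)))
            * ((σ (QuotientGroup.mk g2))⁻¹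
              * ((σ (QuotientGroup.mk g1))⁻¹ * g1) * σ (QuotientGroup.mk g2))
            * ((σ (QuotientGroup.mk g2))⁻¹ * g2)
      rw [hq12]
      group
    have hE : b (QuotientGroup.mk g1 * QuotientGroup.mk g2)
        = f (φ (QuotientGroup.mk g1)) (φ (QuotientGroup.mk g2))
          * (f (QuotientGroup.mk g1) (QuotientGroup.mk g2))⁻¹
          * act (QuotientGroup.mk g2) (b (QuotientGroup.mk g1))
          * b (QuotientGroup.mk g2) := by
      rw [hb]
      refine Additive.ofMul.injective ?_
      simp only [ofMul_mul, ofMul_inv]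
      abel
    have hkey : b (QuotientGroup.mk g1 * QuotientGroup.mk g2) * nOf (g1 * g2)
        = f (φ (QuotientGroup.mk g1)) (φ (QuotientGroup.mk g2))
          * act (φ (QuotientGroup.mk g2)) (b (QuotientGroup.mk g1) * nOf g1)
          * (b (QuotientGroup.mk g2) * nOf g2) := by
      rw [hn12, hEcomp, map_mul (act (QuotientGroup.mk g2)), hE]
      refine Additive.ofMul.injective ?_
      simp only [ofMul_mul, ofMul_inv]
      abel
    show σ (φ (QuotientGroup.mk (g1 * g2)))
          * ((b (QuotientGroup.mk (g1 * g2)) * nOf (g1 * g2) : ↥N) : G)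
        = σ (φ (QuotientGroup.mk g1)) * ((b (QuotientGroup.mk g1) * nOf g1 : ↥N) : G)
          * (σ (φ (QuotientGroup.mk g2)) * ((b (QuotientGroup.mk g2) * nOf g2 : ↥N) : G))
    rw [hq12]
    have hR : σ (φ (QuotientGroup.mk g1)) * ((b (QuotientGroup.mk g1) * nOf g1 : ↥N) : G)
          * (σ (φ (QuotientGroup.mk g2)) * ((b (QuotientGroup.mk g2) * nOf g2 : ↥N) : G))
        = σ (φ (QuotientGroup.mk g1) * φ (QuotientGroup.mk g2))
          * ((f (φ (QuotientGroup.mk g1)) (φ (QuotientGroup.mk g2))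
              * act (φ (QuotientGroup.mk g2)) (b (QuotientGroup.mk g1) * nOf g1)
              * (b (QuotientGroup.mk g2) * nOf g2) : ↥N) : G) := by
      calc σ (φ (QuotientGroup.mk g1)) * ((b (QuotientGroup.mk g1) * nOf g1 : ↥N) : G)
            * (σ (φ (QuotientGroup.mk g2)) * ((b (QuotientGroup.mk g2) * nOf g2 : ↥N) : G))
          = σ (φ (QuotientGroup.mk g1))
            * (((b (QuotientGroup.mk g1) * nOf g1 : ↥N) : G) * σ (φ (QuotientGroup.mk g2)))
            * ((b (QuotientGroup.mk g2) * nOf g2 : ↥N) : G) := by group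
        _ = σ (φ (QuotientGroup.mk g1))
            * (σ (φ (QuotientGroup.mk g2))
              * ((act (φ (QuotientGroup.mk g2)) (b (QuotientGroup.mk g1) * nOf g1) : ↥N) : G))
            * ((b (QuotientGroup.mk g2) * nOf g2 : ↥N) : G) := by rw [hswap]
        _ = (σ (φ (QuotientGroup.mk g1)) * σ (φ (QuotientGroup.mk g2)))
            * ((act (φ (QuotientGroup.mk g2)) (b (QuotientGroup.mk g1) * nOf g1) : ↥N) : G)
            * ((b (QuotientGroup.mk g2) * nOf g2 : ↥N) : G) := by group
        _ = (σ (φ (QuotientGroup.mk g1) * φ (QuotientGroup.mk g2))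
              * ((f (φ (QuotientGroup.mk g1)) (φ (QuotientGroup.mk g2)) : ↥N) : G))
            * ((act (φ (QuotientGroup.mk g2)) (b (QuotientGroup.mk g1) * nOf g1) : ↥N) : G)
            * ((b (QuotientGroup.mk g2) * nOf g2 : ↥N) : G) := by rw [hf_coe]
        _ = σ (φ (QuotientGroup.mk g1) * φ (QuotientGroup.mk g2))
            * ((f (φ (QuotientGroup.mk g1)) (φ (QuotientGroup.mk g2))
                * act (φ (QuotientGroup.mk g2)) (b (QuotientGroup.mk g1) * nOf g1)
                * (b (QuotientGroup.mk g2) * nOf g2) : ↥N) : G) := by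
            simp only [Subgroup.coe_mul]
            group
    rw [hR, map_mul φ, hkey]
  let γh : G →* G := MonoidHom.mk' γ0 hγmul
  have hπγ : ∀ g : G, (QuotientGroup.mk (γ0 g) : G ⧸ N) = φ (QuotientGroup.mk g) := by
    intro g
    show (QuotientGroup.mk (σ (φ (QuotientGroup.mk g))
        * ((b (QuotientGroup.mk g) * nOf g : ↥N) : G)) : G ⧸ N) = _
    rw [QuotientGroup.mk_mul, hπσ,
      (QuotientGroup.eq_one_iff _).mpr (b (QuotientGroup.mk g) * nOf g).2, mul_one]
  have hfixN : ∀ g : G, g ∈ N → γ0 g = g := by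
    intro g hgN
    have hq : (QuotientGroup.mk g : G ⧸ N) = 1 := (QuotientGroup.eq_one_iff g).mpr hgN
    have hnOf : (nOf g : G) = (σ (1 : G ⧸ N))⁻¹ * g := by
      show (σ (QuotientGroup.mk g))⁻¹ * g = _
      rw [hq]
    show σ (φ (QuotientGroup.mk g)) * ((b (QuotientGroup.mk g) * nOf g : ↥N) : G) = g
    rw [Subgroup.coe_mul, hnOf, hq, map_one φ, hσ1, hb1]
    simp
  have hinj : Function.Injective γh := by
    apply (injective_iff_map_eq_one γh).mpr
    intro g hg
    have h1 : (QuotientGroup.mk (γ0 g) : G ⧸ N) = φ (QuotientGroup.mk g) := hπγ g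
    have hg0 : γ0 g = 1 := hg
    rw [hg0, QuotientGroup.mk_one] at h1
    have h2 : (QuotientGroup.mk g : G ⧸ N) = 1 :=
      φ.injective (by rw [map_one, ← h1])
    have h3 : g ∈ N := (QuotientGroup.eq_one_iff g).mp h2
    rw [← hfixN g h3, hg0]
  let γe : G ≃* G := MulEquiv.ofBijective γh (Finite.injective_iff_bijective.mp hinj)
  refine ⟨γe, ?_, ?_⟩
  · intro n hn
    exact hfixN n hn
  · intro g
    exact hπγ g
end

section
/- If the abelian extension 1 → N → G → H → 1 splits, i.e., G = N ⋊ H, then the exact sequences 1 → Aut^{N,H}(G) → Aut_N^H(G) → C₁* → 1 and 1 → Aut^{N,H}(G) → Aut^N(G) → C₂* → 1 split: the maps θ ↦ (hn ↦ h·θ(n)) and φ ↦ (hn ↦ φ(h)·n) are group homomorphism sections with values in automorphisms of G. -/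
/-- The section ψ₁ : C₁* → Aut_N^H(G) for a split extension G = N ⋊ H:
ψ₁(θ)(hn) = h·θ(n), i.e. componentwise ⟨n,h⟩ ↦ ⟨θ(n),h⟩. -/
def psi₁ {N H : Type*} [CommGroup N] [Group H] (α : H →* MulAut N)
    (θ : N ≃* N) : N ⋊[α] H → N ⋊[α] H :=
  fun g => ⟨θ g.left, g.right⟩

/-- The section ψ₂ : C₂* → Aut^N(G) for a split extension G = N ⋊ H:
ψ₂(φ)(hn) = φ(h)·n, i.e. componentwise ⟨n,h⟩ ↦ ⟨n,φ(h)⟩. -/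
def psi₂ {N H : Type*} [CommGroup N] [Group H] (α : H →* MulAut N)
    (φ : H ≃* H) : N ⋊[α] H → N ⋊[α] H :=
  fun g => ⟨g.left, φ g.right⟩

/-! ψ₁(θ) = θ × id and ψ₂(φ) = id × φ act componentwise, so each is an automorphism of
N ⋊ H as soon as it is compatible with the action (`SemidirectProduct.congr`), and the
composition laws hold definitionally. -/

section Sections

variable {N H : Type*} [CommGroup N] [Group H] (α : H →* MulAut N)

open SemidirectProduct

lemma psi₁_eq_congr (θ : N ≃* N) (hθ : ∀ (h : H) (n : N), θ (α h n) = α h (θ n)) :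
    psi₁ α θ = ⇑(congr θ (MulEquiv.refl H) fun h => MulEquiv.ext (hθ h)) :=
  rfl

lemma psi₂_eq_congr (φ : H ≃* H) (hφ : ∀ h : H, α (φ h) = α h) :
    psi₂ α φ = ⇑(congr (MulEquiv.refl N) φ fun h => by rw [hφ]; rfl) :=
  rfl

lemma psi₁_trans (θ₁ θ₂ : N ≃* N) : psi₁ α (θ₁.trans θ₂) = psi₁ α θ₂ ∘ psi₁ α θ₁ :=
  rfl

lemma psi₂_trans (φ₁ φ₂ : H ≃* H) : psi₂ α (φ₁.trans φ₂) = psi₂ α φ₂ ∘ psi₂ α φ₁ :=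
  rfl

end Sections

/-- If the abelian extension splits, G = N ⋊ H, then the sequences
1 → Aut^{N,H}(G) → Aut_N^H(G) → C₁* → 1 and 1 → Aut^{N,H}(G) → Aut^N(G) → C₂* → 1
split: for θ ∈ C₁* the map ψ₁(θ) and for φ ∈ C₂* the map ψ₂(φ) are automorphisms
of G (normalizing N, inducing the identity on H, resp. centralizing N), and
θ ↦ ψ₁(θ), φ ↦ ψ₂(φ) are group homomorphism sections. -/
theorem stmt_19 {N H : Type*} [CommGroup N] [Group H] (α : H →* MulAut N) :
    (∀ θ : N ≃* N, (∀ (h : H) (n : N), θ (α h n) = α h (θ n)) →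
      ∃ γ : N ⋊[α] H ≃* N ⋊[α] H,
        (⇑γ = psi₁ α θ) ∧
        (∀ n : N, γ (SemidirectProduct.inl n) = SemidirectProduct.inl (θ n)) ∧
        (∀ g : N ⋊[α] H, (γ g).right = g.right)) ∧
    (∀ θ₁ θ₂ : N ≃* N, psi₁ α (θ₁.trans θ₂) = psi₁ α θ₂ ∘ psi₁ α θ₁) ∧
    (∀ φ : H ≃* H, (∀ h : H, α (φ h) = α h) →
      ∃ γ : N ⋊[α] H ≃* N ⋊[α] H,
        (⇑γ = psi₂ α φ) ∧
        (∀ n : N, γ (SemidirectProduct.inl n) = SemidirectProduct.inl n) ∧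
        (∀ g : N ⋊[α] H, (γ g).right = φ g.right)) ∧
    (∀ φ₁ φ₂ : H ≃* H, psi₂ α (φ₁.trans φ₂) = psi₂ α φ₂ ∘ psi₂ α φ₁) := by
  refine ⟨fun θ hθ => ?_, psi₁_trans α, fun φ hφ => ?_, psi₂_trans α⟩
  · refine ⟨_, (psi₁_eq_congr α θ hθ).symm, fun n => ?_, fun g => rfl⟩
    ext <;> simp
  · refine ⟨_, (psi₂_eq_congr α φ hφ).symm, fun n => ?_, fun g => rfl⟩
    ext <;> simp
end
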